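/- arXiv:1911.05775 — 8 statements merged into one kernel-verified Lean document; each statement's English description precedes it below -/
import Mathlib

section
/- For every r ∈ ℕ and every real ν > 1 there exists g ∈ ℕ such that the following holds: if ψ is a finite connected simple graph with #E(ψ) < #V(ψ) + r (i.e., its order #E − #V is less than r) whose non-backtracking (Hashimoto) matrix has a complex eigenvalue λ with |λ| ≥ ν, then the girth of ψ is at most g (in particular ψ contains a cycle). -/
/-!
If the girth of `ψ` exceeds `g`, every closed non-backtracking walk has length greater than `g`,
so a closed walk of length `L` passes through each dart at most `2 L / g` times. Call a dart cyclic
if it lies on a closed non-backtracking walk. The cyclic darts form a core of excess less than `r`,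
so their degrees satisfy `∑ (deg - 2) = O(r)`, and along a closed non-backtracking walk of length
`L` the total branching `∑ (deg - 2)` is `O(r² L / g)`. Give cyclic darts weight `1` and the other
darts a tiny weight `δ`, and let `Q d` be the total weight of the successors of `d`. Then every
closed walk satisfies `∑ log Q ≤ L log ν / 2`, so (as in the Bellman–Ford algorithm) there is a
potential `φ` with `w = exp φ` satisfying `B w ≤ √ν w` for the Hashimoto matrix `B`. Comparing an
eigenvector with `w` at the dart where `|x| / w` is maximal shows that every eigenvalue has modulus
at most `√ν < ν`.
-/

/-- The non-backtracking (Hashimoto) matrix of a finite simple graph `ψ`, indexed by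
darts: the `(d,d')` entry is `1` iff the head of `d` is the tail of `d'` and `d'` is
not the reverse of `d`, and `0` otherwise, regarded over `ℂ`. -/
noncomputable def hashimotoMatrix {W : Type} [Fintype W] [DecidableEq W]
    (ψ : SimpleGraph W) [DecidableRel ψ.Adj] : Matrix ψ.Dart ψ.Dart ℂ :=
  fun d d' => if d.snd = d'.fst ∧ d' ≠ d.symm then 1 else 0

open Finset

lemma Finset.card_mul_le_of_le_sub {O : Finset ℕ} {L g : ℕ} (hO : O ⊆ range L)
    (hgap : ∀ i ∈ O, ∀ j ∈ O, i < j → g ≤ j - i) : #O * g ≤ L + g := by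
  rw [← card_range (L + g), show #O * g = #(O ×ˢ range g) by simp]
  refine card_le_card_of_injOn (fun p => p.1 + p.2) (fun p hp => ?_) fun p hp p' hp' h => ?_
  · simp only [coe_product, Set.mem_prod, mem_coe, mem_range] at hp ⊢
    have := mem_range.1 (hO hp.1)
    omega
  · simp only [coe_product, Set.mem_prod, mem_coe, mem_range] at hp hp' h
    have : p.1 = p'.1 := by
      rcases lt_trichotomy p.1 p'.1 with hlt | heq | hgt
      · have := hgap _ hp.1 _ hp'.1 hlt; omega
      · exact heq
      · have := hgap _ hp'.1 _ hp.1 hgt; omega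
    exact Prod.ext this (by omega)

section RelChain

variable {α : Type*} (R : α → α → Prop)

def IsRelChain (c : ℕ → α) (k : ℕ) : Prop := ∀ i < k, R (c i) (c (i + 1))

def IsClosedRelChain (c : ℕ → α) (k : ℕ) : Prop := 0 < k ∧ c k = c 0 ∧ IsRelChain R c k

variable {R}

lemma IsRelChain.shift {c : ℕ → α} {k : ℕ} (h : IsRelChain R c k) (i : ℕ) :
    IsRelChain R (fun t => c (i + t)) (k - i) :=
  fun t ht => by simpa only [← add_assoc] using h (i + t) (by omega)

lemma IsRelChain.mono {c : ℕ → α} {k m : ℕ} (h : IsRelChain R c k) (hm : m ≤ k) :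
    IsRelChain R c m :=
  fun t ht => h t (by omega)

lemma IsRelChain.isClosedRelChain_shift {c : ℕ → α} {k i j : ℕ} (h : IsRelChain R c k)
    (hij : i < j) (hjk : j ≤ k) (hc : c i = c j) :
    IsClosedRelChain R (fun t => c (i + t)) (j - i) :=
  ⟨by omega, by simp [Nat.add_sub_cancel' hij.le, hc], (h.mono hjk).shift i⟩

lemma IsClosedRelChain.sum_mul_le [DecidableEq α] {c : ℕ → α} {L g : ℕ}
    (hc : IsClosedRelChain R c L)
    (hlong : ∀ c' L', IsClosedRelChain R c' L' → g < L') {s : Finset α}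
    (hs : ∀ t < L, c t ∈ s) {h : α → ℝ} (hh : ∀ a ∈ s, 0 ≤ h a) :
    (∑ t ∈ range L, h (c t)) * g ≤ 2 * L * ∑ a ∈ s, h a := by
  -- consecutive visits of `a` are more than `g` steps apart
  have hocc : ∀ a, #{t ∈ range L | c t = a} * g ≤ 2 * L := fun a => by
    refine (card_mul_le_of_le_sub (filter_subset _ _) fun i hi j hj hij => ?_).trans
      (by linarith [hlong c L hc])
    simp only [mem_filter, mem_range] at hi hj
    exact (hlong _ _ (hc.2.2.isClosedRelChain_shift hij hj.1.le (hi.2.trans hj.2.symm))).le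
  rw [sum_comp, sum_mul, mul_sum]
  calc ∑ a ∈ (range L).image c, #{t ∈ range L | c t = a} • h a * g
      ≤ ∑ a ∈ (range L).image c, 2 * L * h a := sum_le_sum fun a ha => by
        obtain ⟨t, ht, rfl⟩ := mem_image.1 ha
        rw [nsmul_eq_mul, mul_right_comm]
        exact mul_le_mul_of_nonneg_right (by exact_mod_cast hocc _) (hh _ (hs t (mem_range.1 ht)))
    _ ≤ ∑ a ∈ s, 2 * L * h a := sum_le_sum_of_subset_of_nonneg
        (fun a ha => by obtain ⟨t, ht, rfl⟩ := mem_image.1 ha; exact hs t (mem_range.1 ht))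
        fun a ha _ => mul_nonneg (by positivity) (hh a ha)

end RelChain

section Potential

variable {α : Type*} {R : α → α → Prop} (A : α → α → ℝ)

def chainWeight (c : ℕ → α) (k : ℕ) : ℝ := ∑ t ∈ range k, A (c t) (c (t + 1))

lemma chainWeight_add (c : ℕ → α) (m n : ℕ) :
    chainWeight A c (m + n) = chainWeight A c m + chainWeight A (fun t => c (m + t)) n := by
  simp only [chainWeight, sum_range_add, add_assoc]

lemma chainWeight_cons (a : α) (c : ℕ → α) (k : ℕ) :
    chainWeight A (fun t => if t = 0 then a else c (t - 1)) (k + 1)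
      = A a (c 0) + chainWeight A c k := by
  simp [chainWeight, sum_range_succ', add_comm]

variable (R) in
def pathWeights (a : α) : Set ℝ :=
  {x | ∃ c k, IsRelChain R c k ∧ Set.InjOn c (Set.Iic k) ∧ c 0 = a ∧ chainWeight A c k = x}

lemma pathWeights_nonempty (a : α) : (pathWeights R A a).Nonempty :=
  ⟨0, fun _ => a, 0, fun _ h => absurd h (Nat.not_lt_zero _), by simp [Set.InjOn], rfl,
    by simp [chainWeight]⟩

variable [Fintype α]

lemma chainWeight_le_mul (c : ℕ → α) (k : ℕ) :
    chainWeight A c k ≤ k * ∑ p : α × α, |A p.1 p.2| := by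
  have hA : ∀ a b, A a b ≤ ∑ p : α × α, |A p.1 p.2| := fun a b =>
    (le_abs_self _).trans <|
      single_le_sum (f := fun p : α × α => |A p.1 p.2|) (fun _ _ => abs_nonneg _) (mem_univ (a, b))
  simpa [chainWeight] using sum_le_card_nsmul (range k) _ _ fun t _ => hA (c t) (c (t + 1))

lemma bddAbove_pathWeights (a : α) : BddAbove (pathWeights R A a) := by
  refine ⟨Fintype.card α * ∑ p : α × α, |A p.1 p.2|, ?_⟩
  rintro _ ⟨c, k, -, hinj, -, rfl⟩
  have hk : k + 1 ≤ Fintype.card α := by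
    simpa using card_le_card_of_injOn c (s := Iic k) (t := univ) (fun _ _ => mem_univ _)
      (by simpa using hinj)
  refine (chainWeight_le_mul A c k).trans (mul_le_mul_of_nonneg_right ?_ (by positivity))
  exact_mod_cast (Nat.le_succ k).trans hk

theorem exists_potential_of_chainWeight_nonpos
    (h : ∀ c k, IsClosedRelChain R c k → chainWeight A c k ≤ 0) :
    ∃ φ : α → ℝ, ∀ a b, R a b → A a b + φ b ≤ φ a := by
  refine ⟨fun a => sSup (pathWeights R A a), fun a b hab => ?_⟩
  rw [← le_sub_iff_add_le']
  refine csSup_le (pathWeights_nonempty A b) ?_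
  rintro _ ⟨c, k, hc, hinj, rfl, rfl⟩
  rw [le_sub_iff_add_le']
  by_cases hmem : ∃ m ≤ k, c m = a
  · obtain ⟨m, hmk, rfl⟩ := hmem
    -- the path returns to `a`: cut off the closed chain `a, c 0, …, c m`
    have hcycle : IsClosedRelChain R (fun t => if t = 0 then c m else c (t - 1)) (m + 1) := by
      refine ⟨m.succ_pos, by simp, fun t ht => ?_⟩
      rcases t with _ | t
      · simpa using hab
      · simpa using hc t (by omega)
    have hsplit := chainWeight_add A c m (k - m)
    rw [Nat.add_sub_cancel' hmk] at hsplit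
    have hsuffix : chainWeight A (fun t => c (m + t)) (k - m) ≤ sSup (pathWeights R A (c m)) :=
      le_csSup (bddAbove_pathWeights A _)
        ⟨_, _, hc.shift m, fun i hi j hj hij => by
          simpa using hinj (Set.mem_Iic.2 (by simp at hi; omega))
            (Set.mem_Iic.2 (by simp at hj; omega)) hij, by simp, rfl⟩
    linarith [h _ _ hcycle, chainWeight_cons A (c m) c m]
  · push Not at hmem
    rw [← chainWeight_cons]
    refine le_csSup (bddAbove_pathWeights A _) ⟨_, k + 1, fun t ht => ?_, ?_, by simp, rfl⟩
    · rcases t with _ | t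
      · simpa using hab
      · simpa using hc t (by omega)
    · rintro (_ | i) hi (_ | j) hj hij
      · rfl
      · exact absurd hij.symm (by simpa using hmem j (by simp at hj; omega))
      · exact absurd hij (by simpa using hmem i (by simp at hi; omega))
      · simpa using hinj (Set.mem_Iic.2 (by simp at hi; omega))
          (Set.mem_Iic.2 (by simp at hj; omega)) (by simpa using hij)

end Potential

open Real in
theorem exists_pos_weight_of_closedRelChain {α : Type*} [Fintype α] {R : α → α → Prop}
    [DecidableRel R] (q : α → ℝ) (hq : ∀ a, 0 < q a) (θ : ℝ)
    (h : ∀ c k, IsClosedRelChain R c k →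
      ∑ t ∈ range k, (log (∑ b ∈ univ.filter (R (c t)), q b) - log (q (c (t + 1)))) ≤ k * θ) :
    ∃ w : α → ℝ, (∀ a, 0 < w a) ∧ ∀ a, ∑ b ∈ univ.filter (R a), w b ≤ exp θ * w a := by
  set Q : α → ℝ := fun a => ∑ b ∈ univ.filter (R a), q b
  obtain ⟨φ, hφ⟩ := exists_potential_of_chainWeight_nonpos (R := R)
    (fun a b => log (Q a) - θ - log (q b)) fun c k hck => by
      have := h c k hck
      simp only [chainWeight, sub_right_comm _ θ, sum_sub_distrib, sum_const, card_range,
        nsmul_eq_mul] at this ⊢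
      linarith
  refine ⟨fun a => exp (φ a), fun a => exp_pos _, fun a => ?_⟩
  rcases (univ.filter (R a)).eq_empty_or_nonempty with hempty | hne
  · rw [hempty, sum_empty]
    positivity
  have hQ : 0 < Q a := sum_pos (fun b _ => hq b) hne
  calc ∑ b ∈ univ.filter (R a), exp (φ b)
      ≤ ∑ b ∈ univ.filter (R a), exp θ * exp (φ a) * q b / Q a := by
        gcongr with b hb
        calc exp (φ b) ≤ exp (φ a - log (Q a) + θ + log (q b)) :=
              exp_le_exp.2 (by linarith [hφ a b (mem_filter.1 hb).2])
          _ = _ := by rw [exp_add, exp_add, exp_sub, exp_log hQ, exp_log (hq b)]; ring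
    _ = exp θ * exp (φ a) := by
        rw [← sum_div, ← mul_sum, mul_div_assoc, div_self hQ.ne', mul_one]

theorem Matrix.norm_le_of_mulVec_eq_smul {ι 𝕜 : Type*} [Fintype ι] [NormedField 𝕜]
    (B : Matrix ι ι 𝕜) {w : ι → ℝ} (hw : ∀ i, 0 < w i) {ρ : ℝ}
    (hB : ∀ i, ∑ j, ‖B i j‖ * w j ≤ ρ * w i) {μ : 𝕜} {x : ι → 𝕜} (hx : x ≠ 0)
    (hμ : B.mulVec x = μ • x) : ‖μ‖ ≤ ρ := by
  obtain ⟨i, hxi⟩ := Function.ne_iff.1 hx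
  obtain ⟨i₀, -, hmax⟩ := exists_max_image univ (fun i => ‖x i‖ / w i) ⟨i, mem_univ i⟩
  set M := ‖x i₀‖ / w i₀
  have hx_le : ∀ j, ‖x j‖ ≤ M * w j := fun j =>
    (div_le_iff₀ (hw j)).1 (hmax j (mem_univ j))
  have hM : 0 < M :=
    (div_pos (norm_pos_iff.2 hxi) (hw i)).trans_le (hmax i (mem_univ i))
  have hx₀ : 0 < ‖x i₀‖ := (div_pos_iff_of_pos_right (hw i₀)).1 hM
  refine le_of_mul_le_mul_right ?_ hx₀
  calc ‖μ‖ * ‖x i₀‖ = ‖∑ j, B i₀ j * x j‖ := by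
        rw [← norm_mul, ← smul_eq_mul, ← Pi.smul_apply, ← hμ]; rfl
    _ ≤ ∑ j, ‖B i₀ j‖ * (M * w j) :=
        (norm_sum_le _ _).trans (sum_le_sum fun j _ => by
          rw [norm_mul]; exact mul_le_mul_of_nonneg_left (hx_le j) (norm_nonneg _))
    _ = M * ∑ j, ‖B i₀ j‖ * w j := by rw [mul_sum]; congr! 1 with j; ring
    _ ≤ M * (ρ * w i₀) := mul_le_mul_of_nonneg_left (hB i₀) hM.le
    _ = ρ * ‖x i₀‖ := by simp only [M]; field_simp [(hw i₀).ne']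

namespace SimpleGraph

variable {V : Type*} {G : SimpleGraph V}

variable (G) in
def NBAdj (d d' : G.Dart) : Prop := G.DartAdj d d' ∧ d' ≠ d.symm

instance [DecidableEq V] : DecidableRel G.NBAdj := fun d d' =>
  inferInstanceAs (Decidable (d.snd = d'.fst ∧ d' ≠ d.symm))

lemma NBAdj.symm {d d' : G.Dart} (h : G.NBAdj d d') : G.NBAdj d'.symm d.symm :=
  ⟨h.1.symm, fun e => h.2 (by simpa using e.symm)⟩

lemma NBAdj.edge_ne {d d' : G.Dart} (h : G.NBAdj d d') : d.edge ≠ d'.edge := by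
  rw [Ne, dart_edge_eq_iff]
  rintro (rfl | rfl)
  · exact d.snd_ne_fst h.1
  · exact h.2 (by simp)

theorem Walk.egirth_le_length_of_isChain_ne {u : V} (p : G.Walk u u) (hp : ¬p.Nil)
    (hchain : p.edges.IsChain (· ≠ ·)) : G.egirth ≤ p.length := by
  set H := fromEdgeSet {e | e ∈ p.edges}
  have hpH : ∀ e ∈ p.edges, e ∈ H.edgeSet := fun e he => by
    rw [edgeSet_fromEdgeSet]
    exact ⟨he, G.not_isDiag_of_mem_edgeSet (p.edges_subset_edgeSet he)⟩
  -- in a forest every walk without immediate edge repetition is a path, but `p` is closed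
  have hH : ¬H.IsAcyclic := fun hH => hp <| by
    have := Walk.isPath_iff_nil.1 ((hH.isPath_iff_isChain (p.transfer H hpH)).2
      (by rwa [Walk.edges_transfer]))
    rwa [← Walk.length_eq_zero_iff, Walk.length_transfer, Walk.length_eq_zero_iff] at this
  obtain ⟨a, w, hw, hlen⟩ := exists_egirth_eq_length.2 hH
  have hw_edges : w.edges.Subperm p.edges := hw.edges_nodup.subperm fun e he => by
    have := w.edges_subset_edgeSet he
    rw [edgeSet_fromEdgeSet] at this
    exact this.1
  have hHG : H ≤ G := by
    rw [fromEdgeSet_le]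
    exact fun e he => p.edges_subset_edgeSet he.1
  calc G.egirth ≤ H.egirth := egirth_anti hHG
    _ = w.length := hlen
    _ ≤ p.length := by simpa using hw_edges.length_le

theorem egirth_le_of_isClosedRelChain {c : ℕ → G.Dart} {k : ℕ}
    (hc : IsClosedRelChain G.NBAdj c k) : G.egirth ≤ k := by
  obtain ⟨hk, hck, hchain⟩ := hc
  set l := (List.range k).map c
  have hne : l ≠ [] := by simp [l]; omega
  have hl : l.IsChain G.DartAdj := by
    rw [List.isChain_map, List.isChain_range]
    exact fun m hm => (hchain m (by omega)).1
  have hclosed : (l.getLast hne).snd = (l.head hne).fst := by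
    simp only [l, List.getLast_map, List.head_map, List.getLast_range, List.head_range]
    rw [(hchain (k - 1) (by omega)).1, Nat.sub_add_cancel hk, hck]
  set p := (Walk.ofDarts l hne hl).copy rfl hclosed
  have hp_len : p.length = k := by simp [p, l]
  have hp_nil : ¬p.Nil := by rw [← Walk.length_eq_zero_iff, hp_len]; omega
  refine hp_len ▸ p.egirth_le_length_of_isChain_ne hp_nil ?_
  rw [Walk.edges_copy, Walk.edges_ofDarts, List.isChain_map, List.isChain_map, List.isChain_range]
  exact fun m hm => (hchain m (by omega)).edge_ne

theorem Connected.card_add_card_le [Fintype V] [DecidableEq V] [DecidableRel G.Adj]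
    (hG : G.Connected) {S : Finset V} {F : Finset (Sym2 V)} (hS : S.Nonempty)
    (hF : F ⊆ G.edgeFinset) (hFS : ∀ e ∈ F, ∀ v ∈ e, v ∈ S) :
    #F + Fintype.card V ≤ #G.edgeFinset + #S := by
  obtain ⟨w₀, hw₀⟩ := hS
  have hparent : ∀ u ∉ S, ∃ z, G.Adj u z ∧ G.dist z w₀ < G.dist u w₀ := by
    intro u hu
    obtain ⟨p, hp⟩ := hG.exists_walk_length_eq_dist u w₀
    have hp_nil : ¬p.Nil := fun h => hu (h.eq ▸ hw₀)
    refine ⟨p.snd, p.adj_snd hp_nil, ?_⟩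
    calc G.dist p.snd w₀ ≤ p.tail.length := dist_le _
      _ < G.dist u w₀ := by rw [← hp, ← p.length_tail_add_one hp_nil]; omega
  choose! z hz using hparent
  -- each vertex outside `S` is sent to the first edge of a shortest path towards `w₀`
  have hinj : #(univ \ S) ≤ #(G.edgeFinset \ F) := by
    refine card_le_card_of_injOn (fun u => s(u, z u)) (fun u hu => ?_) (fun u hu u' hu' he => ?_)
    · have hu : u ∉ S := (mem_sdiff.1 hu).2
      simp only [coe_sdiff, Set.mem_sdiff, mem_coe, mem_edgeFinset, mem_edgeSet]
      exact ⟨(hz u hu).1, fun huF => hu (hFS _ huF u (Sym2.mem_mk_left _ _))⟩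
    · have hu : u ∉ S := (mem_sdiff.1 hu).2
      have hu' : u' ∉ S := (mem_sdiff.1 hu').2
      rcases Sym2.eq_iff.1 he with ⟨h, -⟩ | ⟨h₁, h₂⟩
      · exact h
      · have h := (hz u hu).2
        rw [h₂, h₁] at h
        linarith [(hz u' hu').2]
  rw [card_sdiff_of_subset (subset_univ _), card_sdiff_of_subset hF, card_univ] at hinj
  have := card_le_card hF
  have := card_le_univ S
  omega

def IsCyclicDart (d : G.Dart) : Prop :=
  ∃ c k i, IsClosedRelChain G.NBAdj c k ∧ i ≤ k ∧ c i = d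

lemma _root_.IsClosedRelChain.isCyclicDart {c : ℕ → G.Dart} {k i : ℕ}
    (hc : IsClosedRelChain G.NBAdj c k) (hi : i ≤ k) : IsCyclicDart (c i) :=
  ⟨c, k, i, hc, hi, rfl⟩

lemma IsCyclicDart.symm {d : G.Dart} (hd : IsCyclicDart d) : IsCyclicDart d.symm := by
  obtain ⟨c, k, i, ⟨hk, hck, hchain⟩, hi, rfl⟩ := hd
  refine ⟨fun t => (c (k - t)).symm, k, k - i, ⟨hk, by simp [hck], fun t ht => ?_⟩, by omega,
    by simp [Nat.sub_sub_self hi]⟩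
  have := (hchain (k - (t + 1)) (by omega)).symm
  rwa [show k - (t + 1) + 1 = k - t by omega] at this

lemma IsCyclicDart.exists_nbAdj {d : G.Dart} (hd : IsCyclicDart d) :
    ∃ e, IsCyclicDart e ∧ G.NBAdj e d := by
  obtain ⟨c, k, i, hc, hi, rfl⟩ := hd
  rcases i with _ | i
  · refine ⟨c (k - 1), hc.isCyclicDart (Nat.sub_le k 1), ?_⟩
    have := hc.2.2 (k - 1) (Nat.sub_lt hc.1 one_pos)
    rwa [Nat.sub_add_cancel (Nat.one_le_iff_ne_zero.2 hc.1.ne'), hc.2.1] at this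
  · exact ⟨c i, hc.isCyclicDart (by omega), hc.2.2 i (by omega)⟩

variable [Fintype V] [DecidableRel G.Adj]

variable (G) in
noncomputable def cyclicDarts : Finset G.Dart :=
  (Set.toFinite {d : G.Dart | IsCyclicDart d}).toFinset

@[simp]
lemma mem_cyclicDarts {d : G.Dart} : d ∈ G.cyclicDarts ↔ IsCyclicDart d := by
  simp [cyclicDarts]

variable [DecidableEq V]

variable (G) in
noncomputable def cyclicDegree (v : V) : ℕ := #{d ∈ G.cyclicDarts | d.fst = v}

lemma IsCyclicDart.two_le_cyclicDegree {d : G.Dart} (hd : IsCyclicDart d) :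
    2 ≤ G.cyclicDegree d.fst := by
  obtain ⟨e, he, hed⟩ := hd.exists_nbAdj
  calc 2 = #{d, e.symm} := (card_pair hed.2).symm
    _ ≤ _ := card_le_card fun f hf => by
      rcases mem_insert.1 hf with rfl | hf
      · simpa using hd
      · rw [mem_singleton.1 hf]
        simpa using ⟨he.symm, hed.1⟩

lemma IsCyclicDart.two_le_cyclicDegree_snd {d : G.Dart} (hd : IsCyclicDart d) :
    2 ≤ G.cyclicDegree d.snd := by
  simpa using hd.symm.two_le_cyclicDegree

lemma IsCyclicDart.card_cyclic_nbAdj_lt {d : G.Dart} (hd : IsCyclicDart d) :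
    #{e ∈ G.cyclicDarts | G.NBAdj d e} < G.cyclicDegree d.snd := by
  refine card_lt_card ⟨fun e he => ?_, fun h => ?_⟩
  · simp only [mem_filter] at he ⊢
    exact ⟨he.1, he.2.1.symm⟩
  · have := h (show d.symm ∈ _ by simpa using hd.symm)
    exact (mem_filter.1 this).2.2 rfl

lemma card_cyclicDarts : #G.cyclicDarts = 2 * #(G.cyclicDarts.image Dart.edge) := by
  rw [card_eq_sum_card_image Dart.edge, mul_comm, ← smul_eq_mul, ← sum_const]
  refine sum_congr rfl fun e he => ?_
  obtain ⟨f, hf, rfl⟩ := mem_image.1 he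
  rw [← card_pair f.symm_ne.symm]
  congr 1
  ext d
  simp only [mem_filter, mem_insert, mem_singleton, dart_edge_eq_iff]
  constructor
  · exact And.right
  · rintro (rfl | rfl)
    · exact ⟨hf, .inl rfl⟩
    · exact ⟨by simpa using (mem_cyclicDarts.1 hf).symm, .inr rfl⟩

lemma sum_cyclicDarts_snd {M : Type*} [AddCommMonoid M] (f : V → M) :
    ∑ d ∈ G.cyclicDarts, f d.snd
      = ∑ v ∈ G.cyclicDarts.image (·.fst), G.cyclicDegree v • f v := by
  calc ∑ d ∈ G.cyclicDarts, f d.snd = ∑ d ∈ G.cyclicDarts, f d.fst :=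
        sum_nbij' Dart.symm Dart.symm (fun d hd => by simpa using (mem_cyclicDarts.1 hd).symm)
          (fun d hd => by simpa using (mem_cyclicDarts.1 hd).symm) (fun _ _ => by simp)
          (fun _ _ => by simp) (fun _ _ => by simp)
    _ = _ := sum_comp f _

lemma card_image_edge_cyclicDarts_lt {r : ℕ} (hG : G.Connected)
    (hcard : #G.edgeFinset < Fintype.card V + r) (hne : G.cyclicDarts.Nonempty) :
    #(G.cyclicDarts.image Dart.edge) < #(G.cyclicDarts.image (·.fst)) + r := by
  have := hG.card_add_card_le (hne.image _) (S := G.cyclicDarts.image (·.fst))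
    (F := G.cyclicDarts.image Dart.edge)
    (fun e he => by obtain ⟨d, -, rfl⟩ := mem_image.1 he; simp)
    (fun e he v hv => by
      obtain ⟨d, hd, rfl⟩ := mem_image.1 he
      rcases Sym2.mem_iff.1 hv with rfl | rfl
      · exact mem_image_of_mem _ hd
      · exact mem_image.2 ⟨d.symm, by simpa using (mem_cyclicDarts.1 hd).symm, rfl⟩)
  omega

theorem sum_cyclicDegree_sub_two_le {r : ℕ} (hG : G.Connected)
    (hcard : #G.edgeFinset < Fintype.card V + r) :
    ∑ d ∈ G.cyclicDarts, ((G.cyclicDegree d.snd : ℝ) - 2) ≤ 4 * r ^ 2 := by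
  rcases G.cyclicDarts.eq_empty_or_nonempty with hempty | hne
  · simp [hempty]
  set S := G.cyclicDarts.image (·.fst)
  set D : V → ℝ := fun v => G.cyclicDegree v
  have hD : ∀ v ∈ S, 2 ≤ D v := fun v hv => by
    obtain ⟨d, hd, rfl⟩ := mem_image.1 hv
    show (2 : ℝ) ≤ G.cyclicDegree d.fst
    exact_mod_cast (mem_cyclicDarts.1 hd).two_le_cyclicDegree
  -- the excess `∑ (D v - 2) = 2 (#edges - #vertices)` of the cyclic core is less than `2 r`
  have hexcess : ∑ v ∈ S, (D v - 2) ≤ 2 * r - 2 := by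
    have hsum : (∑ v ∈ S, D v : ℝ) = #G.cyclicDarts := by
      rw [card_eq_sum_card_image (·.fst)]
      push_cast
      rfl
    have hlt := card_image_edge_cyclicDarts_lt hG hcard hne
    have hcd := G.card_cyclicDarts
    rw [sum_sub_distrib, hsum, sum_const, nsmul_eq_mul]
    have : (#(G.cyclicDarts.image Dart.edge) : ℝ) + 1 ≤ #S + r := by exact_mod_cast hlt
    have : (#G.cyclicDarts : ℝ) = 2 * #(G.cyclicDarts.image Dart.edge) := by exact_mod_cast hcd
    linarith
  have hDle : ∀ v ∈ S, D v ≤ 2 * r := fun v hv => by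
    linarith [single_le_sum (fun w hw => sub_nonneg.2 (hD w hw)) hv]
  calc ∑ d ∈ G.cyclicDarts, (D d.snd - 2) = ∑ v ∈ S, D v * (D v - 2) := by
        rw [sum_cyclicDarts_snd (fun v => D v - 2)]
        simp [D, S]
    _ ≤ ∑ v ∈ S, 2 * r * (D v - 2) :=
        sum_le_sum fun v hv => mul_le_mul_of_nonneg_right (hDle v hv) (sub_nonneg.2 (hD v hv))
    _ ≤ 2 * r * (2 * r - 2) := by rw [← mul_sum]; gcongr
    _ ≤ 4 * r ^ 2 := by nlinarith

lemma IsCyclicDart.sum_nbAdj_ite_le {δ : ℝ} (hδ : 0 ≤ δ) {d : G.Dart} (hd : IsCyclicDart d) :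
    ∑ e ∈ univ.filter (G.NBAdj d), (if e ∈ G.cyclicDarts then 1 else δ)
      ≤ (G.cyclicDegree d.snd : ℝ) - 1 + Fintype.card G.Dart * δ := by
  have hcyc : #{e ∈ univ.filter (G.NBAdj d) | e ∈ G.cyclicDarts} + 1 ≤ G.cyclicDegree d.snd := by
    rw [show {e ∈ univ.filter (G.NBAdj d) | e ∈ G.cyclicDarts} = {e ∈ G.cyclicDarts | G.NBAdj d e}
      by ext; simp [and_comm]]
    exact hd.card_cyclic_nbAdj_lt
  have hsucc : #(univ.filter (G.NBAdj d)) ≤ Fintype.card G.Dart := card_le_univ _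
  calc ∑ e ∈ univ.filter (G.NBAdj d), (if e ∈ G.cyclicDarts then 1 else δ)
      ≤ ∑ e ∈ univ.filter (G.NBAdj d), ((if e ∈ G.cyclicDarts then 1 else 0) + δ) :=
        sum_le_sum fun e _ => by split_ifs <;> linarith
    _ = #{e ∈ univ.filter (G.NBAdj d) | e ∈ G.cyclicDarts}
          + #(univ.filter (G.NBAdj d)) * δ := by
        rw [sum_add_distrib, sum_boole, sum_const, nsmul_eq_mul]
    _ ≤ _ := by
        have h1 : (#{e ∈ univ.filter (G.NBAdj d) | e ∈ G.cyclicDarts} : ℝ) + 1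
            ≤ G.cyclicDegree d.snd := by exact_mod_cast hcyc
        have h2 : (#(univ.filter (G.NBAdj d)) : ℝ) ≤ Fintype.card G.Dart := by exact_mod_cast hsucc
        nlinarith

lemma _root_.IsClosedRelChain.sum_cyclicDegree_sub_two_mul_le {r g L : ℕ} {c : ℕ → G.Dart}
    (hG : G.Connected) (hcard : #G.edgeFinset < Fintype.card V + r)
    (hlong : ∀ c L, IsClosedRelChain G.NBAdj c L → g < L) (hc : IsClosedRelChain G.NBAdj c L) :
    (∑ t ∈ range L, ((G.cyclicDegree (c t).snd : ℝ) - 2)) * g ≤ 8 * L * r ^ 2 :=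
  calc _ ≤ 2 * L * ∑ d ∈ G.cyclicDarts, ((G.cyclicDegree d.snd : ℝ) - 2) :=
        hc.sum_mul_le hlong (fun t ht => mem_cyclicDarts.2 (hc.isCyclicDart ht.le)) fun d hd =>
          sub_nonneg.2 (by exact_mod_cast (mem_cyclicDarts.1 hd).two_le_cyclicDegree_snd)
    _ ≤ 2 * L * (4 * r ^ 2) := by gcongr; exact sum_cyclicDegree_sub_two_le hG hcard
    _ = 8 * L * r ^ 2 := by ring

open Real in
theorem exists_pos_weight_of_lt_length {θ : ℝ} (hθ : 0 < θ) {r g : ℕ} (hG : G.Connected)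
    (hcard : #G.edgeFinset < Fintype.card V + r) (hg₀ : 0 < g) (hg : 32 * r ^ 2 ≤ g * θ)
    (hlong : ∀ c L, IsClosedRelChain G.NBAdj c L → g < L) :
    ∃ w : G.Dart → ℝ, (∀ d, 0 < w d) ∧
      ∀ d, ∑ e ∈ univ.filter (G.NBAdj d), w e ≤ exp (θ / 2) * w d := by
  set N := Fintype.card G.Dart
  set δ := θ / (4 * (N + 1))
  have hδ : 0 < δ := by positivity
  have hNδ : N * δ ≤ θ / 4 := by
    rw [mul_div_assoc', div_le_div_iff₀ (by positivity) (by norm_num)]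
    nlinarith
  -- darts off the cyclic core get a weight so small that they are negligible
  refine exists_pos_weight_of_closedRelChain (fun d => if d ∈ G.cyclicDarts then 1 else δ)
    (fun d => by split_ifs <;> positivity) (θ / 2) fun c L hc => ?_
  have hcyc : ∀ t ≤ L, c t ∈ G.cyclicDarts := fun t ht => mem_cyclicDarts.2 (hc.isCyclicDart ht)
  have hstep : ∀ t ∈ range L,
      log (∑ e ∈ univ.filter (G.NBAdj (c t)), if e ∈ G.cyclicDarts then 1 else δ)
        - log (if c (t + 1) ∈ G.cyclicDarts then 1 else δ)
      ≤ ((G.cyclicDegree (c t).snd : ℝ) - 2) + θ / 4 := fun t ht => by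
    have ht := mem_range.1 ht
    rw [if_pos (hcyc (t + 1) ht), log_one, sub_zero]
    have hpos : 0 < ∑ e ∈ univ.filter (G.NBAdj (c t)), if e ∈ G.cyclicDarts then 1 else δ :=
      sum_pos' (fun e _ => by split_ifs <;> positivity)
        ⟨c (t + 1), mem_filter.2 ⟨mem_univ _, hc.2.2 t ht⟩, by simp [hcyc (t + 1) ht]⟩
    linarith [log_le_sub_one_of_pos hpos,
      (mem_cyclicDarts.1 (hcyc t ht.le)).sum_nbAdj_ite_le hδ.le]
  have hexcess : ∑ t ∈ range L, ((G.cyclicDegree (c t).snd : ℝ) - 2) ≤ L * θ / 4 := by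
    refine le_of_mul_le_mul_right ?_ (show (0 : ℝ) < g by exact_mod_cast hg₀)
    nlinarith [hc.sum_cyclicDegree_sub_two_mul_le hG hcard hlong,
      mul_le_mul_of_nonneg_left hg (by positivity : (0 : ℝ) ≤ L)]
  calc _ ≤ ∑ t ∈ range L, (((G.cyclicDegree (c t).snd : ℝ) - 2) + θ / 4) := sum_le_sum hstep
    _ = ∑ t ∈ range L, ((G.cyclicDegree (c t).snd : ℝ) - 2) + L * (θ / 4) := by
        rw [sum_add_distrib, sum_const, card_range, nsmul_eq_mul]
    _ ≤ L * (θ / 2) := by linarith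

end SimpleGraph

lemma sum_norm_hashimotoMatrix_mul {W : Type} [Fintype W] [DecidableEq W] (ψ : SimpleGraph W)
    [DecidableRel ψ.Adj] (w : ψ.Dart → ℝ) (d : ψ.Dart) :
    ∑ e, ‖hashimotoMatrix ψ d e‖ * w e = ∑ e ∈ univ.filter (ψ.NBAdj d), w e := by
  rw [sum_filter]
  refine sum_congr rfl fun e _ => ?_
  by_cases h : d.snd = e.fst ∧ e ≠ d.symm <;>
    simp [hashimotoMatrix, SimpleGraph.NBAdj, SimpleGraph.DartAdj, h]

open Real in
/-- For every `r ∈ ℕ` and every real `ν > 1` there is a `g ∈ ℕ` such that every finite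
connected simple graph of order `< r` (i.e. `#E < #V + r`) whose Hashimoto matrix has
an eigenvalue of absolute value at least `ν` has girth at most `g`. -/
theorem tangles_have_bounded_girth (r : ℕ) (ν : ℝ) (hν : 1 < ν) :
    ∃ g : ℕ, ∀ (W : Type) (_ : Fintype W) (_ : DecidableEq W)
      (ψ : SimpleGraph W) (_ : DecidableRel ψ.Adj),
      ψ.Connected →
      ψ.edgeFinset.card < Fintype.card W + r →
      (∃ lam : ℂ, ν ≤ ‖lam‖ ∧
        ∃ x : ψ.Dart → ℂ, x ≠ 0 ∧ (hashimotoMatrix ψ).mulVec x = lam • x) →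
      ψ.egirth ≤ (g : ℕ∞) := by
  have hθ : 0 < log ν := log_pos hν
  set g := ⌈32 * r ^ 2 / log ν⌉₊ + 1
  have hg : 32 * r ^ 2 ≤ g * log ν := by
    rw [← div_le_iff₀ hθ]
    exact (Nat.le_ceil _).trans (by simp [g])
  refine ⟨g, fun W _ _ ψ _ hψ hcard ⟨lam, hlam, x, hx, heig⟩ => ?_⟩
  by_contra! hgirth
  have hlong : ∀ c L, IsClosedRelChain ψ.NBAdj c L → g < L := fun c L hc => by
    exact_mod_cast hgirth.trans_le (ψ.egirth_le_of_isClosedRelChain hc)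
  obtain ⟨w, hw, hsum⟩ := ψ.exists_pos_weight_of_lt_length hθ hψ hcard (by positivity) hg hlong
  have hlam_le := (hashimotoMatrix ψ).norm_le_of_mulVec_eq_smul hw
    (fun d => (sum_norm_hashimotoMatrix_mul ψ w d).trans_le (hsum d)) hx heig
  have : exp (log ν / 2) < ν := by
    calc exp (log ν / 2) < exp (log ν) := exp_lt_exp.2 (by linarith)
      _ = ν := exp_log (by linarith)
  linarith
end

section
/- Let B be a finite connected simple graph on vertex set V with m = #V ≥ 1. For every real ε ∈ (0,1) there exist a real ν₁ > 0 and n₀ ∈ ℕ such that for all n ≥ n₀ the following holds: let G be any simple graph on vertex set V × Fin n with the property that for every edge {a,b} of B there exists a permutation σ of Fin n with (a,i) adjacent to (b,σ(i)) in G for every i ∈ Fin n. Then every subset U ⊆ V × Fin n satisfying min_{v∈V} #U_v < (1−ε)·max_{v∈V} #U_v also satisfies #(Γ_G(U) ∖ U) ≥ ν₁·#U. -/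
/-!
Along a path in `B` from a vertex with a largest fibre of `U` to one with a smallest, which has
fewer than `m` edges, the fibre size drops below `(1 - ε)` times its start, so with
`c = 1 - ε / m` (and `c ^ m ≥ 1 - ε` by Bernoulli) some edge `a b` has `|U_b| < c |U_a|` while
`|U_a| ≥ (1 - ε) max_v |U_v|`. The permutation covering `a b` maps `U_a` injectively into the
fibre of `Γ_G(U)` over `b`, so at least `|U_a| - |U_b| ≥ (ε / m) |U_a|` vertices of `Γ_G(U) \ U`
lie over `b`; and `|U| ≤ m max_v |U_v|`.
-/

def nbhd {W : Type*} (G : SimpleGraph W) (U : Set W) : Set W :=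
  {w | ∃ u ∈ U, G.Adj u w}

noncomputable def fibCard {V : Type*} {n : ℕ} (U : Set (V × Fin n)) (v : V) : ℕ :=
  {i : Fin n | (v, i) ∈ U}.ncard

theorem one_sub_le_one_sub_div_pow {ε : ℝ} {m : ℕ} (hm : m ≠ 0) (hε : ε ≤ 2 * m) :
    1 - ε ≤ (1 - ε / m) ^ m := by
  have hm' : (m : ℝ) ≠ 0 := Nat.cast_ne_zero.mpr hm
  have hbern := one_add_mul_le_pow (a := -(ε / m)) ?_ m
  · rwa [mul_neg, mul_div_cancel₀ _ hm', ← sub_eq_add_neg, ← sub_eq_add_neg] at hbern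
  · rw [neg_le_neg_iff, div_le_iff₀ (by positivity)]
    exact hε

section Fibres

variable {V : Type*} {n : ℕ}

theorem ncard_eq_sum_fibCard [Fintype V] (U : Set (V × Fin n)) :
    U.ncard = ∑ v, fibCard U v := by
  classical
  simp only [fibCard, Set.ncard_eq_toFinset_card', Set.toFinset_ofPred, Finset.card_filter,
    Set.toFinset_card, Fintype.card_subtype]
  exact Fintype.sum_prod_type (fun x => if x ∈ U then 1 else 0)

theorem ncard_le_card_mul_sup'_fibCard [Fintype V] [Nonempty V] (U : Set (V × Fin n)) :
    (U.ncard : ℝ) ≤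
      Fintype.card V * Finset.univ.sup' Finset.univ_nonempty (fun v => (fibCard U v : ℝ)) := by
  rw [ncard_eq_sum_fibCard, Nat.cast_sum, ← nsmul_eq_mul]
  exact Finset.sum_le_card_nsmul _ _ _ fun v hv => Finset.le_sup' (fun v => (fibCard U v : ℝ)) hv

theorem fibCard_le_ncard [Finite V] (S : Set (V × Fin n)) (v : V) : fibCard S v ≤ S.ncard :=
  Set.ncard_le_ncard_of_injOn (Prod.mk v) (fun _ h => h) (Prod.mk_right_injective v).injOn

theorem fibCard_le_fibCard_add_fibCard_diff (S U : Set (V × Fin n)) (v : V) :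
    fibCard S v ≤ fibCard U v + fibCard (S \ U) v := by
  refine (Set.ncard_le_ncard fun i hi => ?_).trans (Set.ncard_union_le _ _)
  by_cases h : (v, i) ∈ U
  · exact Or.inl h
  · exact Or.inr ⟨hi, h⟩

theorem fibCard_le_fibCard_nbhd {G : SimpleGraph (V × Fin n)} {a b : V} {σ : Fin n → Fin n}
    (hσ : σ.Injective) (hadj : ∀ i, G.Adj (a, i) (b, σ i)) (U : Set (V × Fin n)) :
    fibCard U a ≤ fibCard (nbhd G U) b :=
  Set.ncard_le_ncard_of_injOn σ (fun i hi => ⟨(a, i), hi, hadj i⟩) hσ.injOn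

theorem fibCard_le_fibCard_add_ncard_nbhd_diff [Finite V] {G : SimpleGraph (V × Fin n)}
    {a b : V} {σ : Fin n → Fin n} (hσ : σ.Injective) (hadj : ∀ i, G.Adj (a, i) (b, σ i))
    (U : Set (V × Fin n)) :
    fibCard U a ≤ fibCard U b + (nbhd G U \ U).ncard :=
  calc fibCard U a ≤ fibCard (nbhd G U) b := fibCard_le_fibCard_nbhd hσ hadj U
    _ ≤ fibCard U b + fibCard (nbhd G U \ U) b := fibCard_le_fibCard_add_fibCard_diff _ _ _
    _ ≤ fibCard U b + (nbhd G U \ U).ncard := Nat.add_le_add_left (fibCard_le_ncard _ _) _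

end Fibres

namespace SimpleGraph

variable {V : Type*} {B : SimpleGraph V} {f : V → ℝ} {c : ℝ}

theorem Walk.exists_adj_lt_mul_of_lt_pow_length (hf : ∀ v, 0 ≤ f v) (hc0 : 0 ≤ c)
    (hc1 : c ≤ 1) {x y : V} (p : B.Walk x y) (hxy : f y < c ^ p.length * f x) :
    ∃ a b, B.Adj a b ∧ f b < c * f a ∧ c ^ p.length * f x ≤ f a := by
  induction p with
  | nil => simp at hxy
  | @cons u u' w hadj q ih =>
    rw [Walk.length_cons, pow_succ] at hxy ⊢
    by_cases hstep : f u' < c * f u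
    · exact ⟨u, u', hadj, hstep,
        mul_le_of_le_one_left (hf u) (mul_le_one₀ (pow_le_one₀ hc0 hc1) hc0 hc1)⟩
    · have hscale : c ^ q.length * c * f u ≤ c ^ q.length * f u' := by
        rw [mul_assoc]; exact mul_le_mul_of_nonneg_left (not_lt.mp hstep) (pow_nonneg hc0 _)
      obtain ⟨a, b, hab, hdrop, hbig⟩ := ih (hxy.trans_le hscale)
      exact ⟨a, b, hab, hdrop, hscale.trans hbig⟩

theorem Connected.exists_adj_lt_mul_of_lt_pow_card [Fintype V] (hB : B.Connected)
    (hf : ∀ v, 0 ≤ f v) (hc0 : 0 ≤ c) (hc1 : c ≤ 1) {x y : V}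
    (hxy : f y < c ^ Fintype.card V * f x) :
    ∃ a b, B.Adj a b ∧ f b < c * f a ∧ c ^ Fintype.card V * f x ≤ f a := by
  classical
  obtain ⟨p, hp⟩ := (hB.preconnected x y).some.toPath
  have hpow : c ^ Fintype.card V ≤ c ^ p.length :=
    pow_le_pow_of_le_one hc0 hc1 hp.length_lt.le
  obtain ⟨a, b, hab, hdrop, hbig⟩ := p.exists_adj_lt_mul_of_lt_pow_length hf hc0 hc1
    (hxy.trans_le (mul_le_mul_of_nonneg_right hpow (hf x)))
  exact ⟨a, b, hab, hdrop, (mul_le_mul_of_nonneg_right hpow (hf x)).trans hbig⟩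

end SimpleGraph

theorem almost_equal_fibres_general
    {V : Type} [Fintype V] [Nonempty V]
    (B : SimpleGraph V) (hconn : B.Connected)
    (ε : ℝ) (hε0 : 0 < ε) (hε1 : ε < 1) :
    ∃ ν₁ : ℝ, 0 < ν₁ ∧ ∃ n₀ : ℕ, ∀ n : ℕ, n₀ ≤ n →
      ∀ G : SimpleGraph (V × Fin n),
        (∀ a b : V, B.Adj a b → ∃ σ : Equiv.Perm (Fin n), ∀ i : Fin n, G.Adj (a, i) (b, σ i)) →
        ∀ U : Set (V × Fin n),
          ((Finset.univ.inf' Finset.univ_nonempty (fun v => fibCard U v) : ℝ) <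
            (1 - ε) * (Finset.univ.sup' Finset.univ_nonempty (fun v => fibCard U v) : ℝ)) →
          ν₁ * (U.ncard : ℝ) ≤ (((nbhd G U) \ U).ncard : ℝ) := by
  set m : ℝ := (Fintype.card V : ℝ)
  have hm : 1 ≤ m := Nat.one_le_cast.mpr Fintype.card_pos
  set c : ℝ := 1 - ε / m
  have hc0 : 0 ≤ c := sub_nonneg.mpr ((div_le_self hε0.le hm).trans hε1.le)
  have hc1 : c ≤ 1 := sub_le_self _ (by positivity)
  have hc : 1 - ε ≤ c ^ Fintype.card V :=
    one_sub_le_one_sub_div_pow Fintype.card_ne_zero (by linarith)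
  refine ⟨ε * (1 - ε) / m ^ 2, div_pos (mul_pos hε0 (sub_pos.mpr hε1)) (by positivity), 0,
    fun n _ G hG U hU => ?_⟩
  obtain ⟨x, -, hx⟩ := Finset.exists_mem_eq_sup' Finset.univ_nonempty (fun v => (fibCard U v : ℝ))
  obtain ⟨y, -, hy⟩ := Finset.exists_mem_eq_inf' Finset.univ_nonempty (fun v => (fibCard U v : ℝ))
  have hsize := ncard_le_card_mul_sup'_fibCard U
  rw [hx] at hsize hU
  rw [hy] at hU
  obtain ⟨a, b, hab, hdrop, hbig⟩ := hconn.exists_adj_lt_mul_of_lt_pow_card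
    (f := fun v => (fibCard U v : ℝ)) (fun _ => Nat.cast_nonneg _) hc0 hc1
    (hU.trans_le (mul_le_mul_of_nonneg_right hc (Nat.cast_nonneg _)))
  obtain ⟨σ, hσ⟩ := hG a b hab
  have hgap : (fibCard U a : ℝ) ≤ fibCard U b + (nbhd G U \ U).ncard := by
    exact_mod_cast fibCard_le_fibCard_add_ncard_nbhd_diff σ.injective hσ U
  calc ε * (1 - ε) / m ^ 2 * U.ncard ≤ ε * (1 - ε) / m ^ 2 * (m * fibCard U x) := by gcongr
    _ = ε / m * ((1 - ε) * fibCard U x) := by field_simp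
    _ ≤ ε / m * fibCard U a := by
      gcongr
      exact (mul_le_mul_of_nonneg_right hc (Nat.cast_nonneg _)).trans hbig
    _ = fibCard U a - c * fibCard U a := by ring
    _ ≤ (nbhd G U \ U).ncard := by linarith

/-- Almost-equal-fibre lemma: if `B` is a finite connected simple graph on a nonempty
vertex set `V`, then for every `ε ∈ (0,1)` there are `ν₁ > 0` and `n₀` such that for every
`n ≥ n₀`, every graph `G` on `V × Fin n` in which each edge `{a,b}` of `B` is covered by a
permutation `σ` (i.e. `(a,i) ∼ (b,σ i)` for all `i`), and every `U ⊆ V × Fin n` whose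
minimum fibre size is less than `(1-ε)` times its maximum fibre size, we have
`#(Γ_G(U) \ U) ≥ ν₁·#U`. -/
theorem almost_equal_fibres
    {V : Type} [Fintype V] [DecidableEq V] [Nonempty V]
    (B : SimpleGraph V) (hconn : B.Connected)
    (ε : ℝ) (hε0 : 0 < ε) (hε1 : ε < 1) :
    ∃ ν₁ : ℝ, 0 < ν₁ ∧ ∃ n₀ : ℕ, ∀ n : ℕ, n₀ ≤ n →
      ∀ G : SimpleGraph (V × Fin n),
        (∀ a b : V, B.Adj a b → ∃ σ : Equiv.Perm (Fin n), ∀ i : Fin n, G.Adj (a, i) (b, σ i)) →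
        ∀ U : Set (V × Fin n),
          ((Finset.univ.inf' Finset.univ_nonempty (fun v => fibCard U v) : ℝ) <
            (1 - ε) * (Finset.univ.sup' Finset.univ_nonempty (fun v => fibCard U v) : ℝ)) →
          ν₁ * (U.ncard : ℝ) ≤ (((nbhd G U) \ U).ncard : ℝ) :=
  almost_equal_fibres_general B hconn ε hε0 hε1
end

section
/- Let n ∈ ℕ with n ≥ 1 and let W, W' be subsets of Fin n with #W ≤ #W'. Then the number of permutations σ of Fin n whose cycle structure is a single n-cycle (i.e., σ is a cycle whose support is all of Fin n) and which satisfy σ(W) ⊆ W', multiplied by C(n,#W), is at most n!·C(#W',#W). Equivalently, for σ a uniformly random full n-cycle, the probability that σ(W) ⊆ W' is at most n·C(#W',#W)/C(n,#W), i.e., at most n times the corresponding probability for a uniformly random permutation. -/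
/-!
Dropping the cycle condition, it suffices to count all permutations `σ` with `σ(W) ⊆ W'`.
Permutations act transitively on `k`-subsets, so each fibre `{σ | σ(W) = U}` with `#U = k` is a
coset of the stabilizer of `W`. Summing over the `C(#W', k)` subsets `U ⊆ W'` gives
`C(#W', k) · |Stab W|`, and the case `W' = univ` gives `n! = C(n, k) · |Stab W|`.
-/

open Finset MulAction Equiv
open scoped Pointwise

theorem MulAction.card_smul_eq_eq_card_stabilizer {G X : Type*} [Group G] [MulAction G X]
    {b c : X} (hc : c ∈ orbit G b) :
    Nat.card {g : G // g • b = c} = Nat.card (stabilizer G b) := by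
  obtain ⟨h, rfl⟩ := hc
  refine Nat.card_congr (Equiv.subtypeEquiv (Equiv.mulLeft h⁻¹) fun g => ?_)
  simp [mul_smul, inv_smul_eq_iff]

namespace Finset

variable {α : Type*} [DecidableEq α]

theorem mem_orbit_perm_of_card_eq {s u : Finset α} (h : #u = #s) :
    u ∈ orbit (Perm α) s := by
  have := Set.powersetCard.isPretransitive (α := α) (n := #s)
  obtain ⟨σ, hσ⟩ := exists_smul_eq (Perm α) (⟨s, rfl⟩ : Set.powersetCard α #s) ⟨u, h⟩
  exact ⟨σ, congrArg Subtype.val hσ⟩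

variable [Fintype α]

theorem card_perm_smul_subset (s t : Finset α) :
    Nat.card {σ : Perm α // σ • s ⊆ t} = (#t).choose #s * Nat.card (stabilizer (Perm α) s) := by
  have hmaps : ∀ σ ∈ ({σ | σ • s ⊆ t} : Finset (Perm α)), σ • s ∈ t.powersetCard #s :=
    fun σ hσ => mem_powersetCard.2 ⟨(mem_filter.1 hσ).2, card_smul_finset σ s⟩
  have hfibre : ∀ u ∈ t.powersetCard #s,
      #{σ ∈ ({σ | σ • s ⊆ t} : Finset (Perm α)) | σ • s = u} =
        Nat.card (stabilizer (Perm α) s) := by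
    intro u hu
    obtain ⟨hut, hus⟩ := mem_powersetCard.1 hu
    rw [← card_smul_eq_eq_card_stabilizer (mem_orbit_perm_of_card_eq hus),
      Nat.card_eq_fintype_card, Fintype.card_subtype, filter_filter]
    exact congrArg card (filter_congr fun σ _ => ⟨And.right, fun h => ⟨h ▸ hut, h⟩⟩)
  rw [Nat.card_eq_fintype_card, Fintype.card_subtype, card_eq_sum_card_fiberwise hmaps,
    sum_congr rfl hfibre, sum_const, card_powersetCard, smul_eq_mul]

theorem card_perm_smul_subset_mul_choose (s t : Finset α) :
    Nat.card {σ : Perm α // σ • s ⊆ t} * (Fintype.card α).choose #s =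
      (Fintype.card α).factorial * (#t).choose #s := by
  have htotal := card_perm_smul_subset s univ
  simp only [subset_univ, card_univ] at htotal
  rw [Nat.card_congr (subtypeUnivEquiv fun _ => trivial), Nat.card_perm,
    Nat.card_eq_fintype_card] at htotal
  rw [card_perm_smul_subset, htotal]
  ring

end Finset

theorem count_full_cycles_mapping_into_general
    (n : ℕ) (W W' : Finset (Fin n)) :
    Nat.card {σ : Equiv.Perm (Fin n) //
        (σ.IsCycle ∧ σ.support = Finset.univ) ∧ W.image σ ⊆ W'} * n.choose W.card ≤
      n.factorial * W'.card.choose W.card := by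
  calc _ ≤ Nat.card {σ : Perm (Fin n) // σ • W ⊆ W'} * n.choose #W :=
        Nat.mul_le_mul_right _ (Nat.card_mono (Set.toFinite _) fun σ hσ => hσ.2)
    _ = _ := by simpa using card_perm_smul_subset_mul_choose W W'

/-- For `n ≥ 1` and `W, W' ⊆ Fin n` with `#W ≤ #W'`, the number of full `n`-cycles
`σ` (cycles whose support is all of `Fin n`) with `σ(W) ⊆ W'`, multiplied by
`C(n,#W)`, is at most `n!·C(#W',#W)`; i.e. the probability that a uniformly random
full cycle maps `W` into `W'` is at most `n` times the corresponding probability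
for a uniformly random permutation. -/
theorem count_full_cycles_mapping_into
    (n : ℕ) (hn : 1 ≤ n) (W W' : Finset (Fin n)) (h : W.card ≤ W'.card) :
    Nat.card {σ : Equiv.Perm (Fin n) //
        (σ.IsCycle ∧ σ.support = Finset.univ) ∧ W.image σ ⊆ W'} * n.choose W.card ≤
      n.factorial * W'.card.choose W.card :=
  count_full_cycles_mapping_into_general n W W'
end

section
/- Let n ∈ ℕ and let A, A', B, B' be subsets of Fin n. Let N be the number of permutations σ of Fin n with σ(A) ⊆ A' and σ⁻¹(B) ⊆ B'. Then N²·C(n,#A)·C(n,#B) ≤ (n!)²·C(#A',#A)·C(#B',#B). In particular N = 0 if #A' < #A or #B' < #B, and for a uniformly random permutation σ of Fin n the probability that both containments hold is at most the geometric mean of C(#A',#A)/C(n,#A) and C(#B',#B)/C(n,#B). -/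
/-!
Permutations act transitively on the `k`-subsets of an `n`-element set, so for `#A = k` the map
`σ ↦ σ(A)` has fibres of equal size `n! / C(n,k)` over all `C(n,k)` subsets of size `k`. Hence
exactly `n! · C(#A',k) / C(n,k)` permutations satisfy `σ(A) ⊆ A'`, and likewise (after `σ ↦ σ⁻¹`)
for `σ⁻¹(B) ⊆ B'`. The number `N` of permutations satisfying both conditions is at most each of
these counts, so `N²` is at most their product.
-/

open Finset Equiv
open scoped Nat

lemma card_filter_inv {G : Type*} [Group G] [Fintype G] (p : G → Prop) [DecidablePred p] :
    #{g : G | p g⁻¹} = #{g | p g} :=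
  card_nbij' (·⁻¹) (·⁻¹) (fun g hg => by simpa using hg) (fun g hg => by simpa using hg)
    (fun g _ => inv_inv g) (fun g _ => inv_inv g)

namespace Equiv.Perm

variable {α : Type*} [Fintype α] [DecidableEq α]

lemma exists_image_eq_of_card_eq {S T : Finset α} (h : #S = #T) :
    ∃ π : Perm α, S.image π = T := by
  let e : S ≃ T := equivOfCardEq h
  refine ⟨e.extendSubtype, eq_of_subset_of_card_le ?_ ?_⟩
  · intro y hy
    obtain ⟨x, hx, rfl⟩ := mem_image.1 hy
    exact e.extendSubtype_mem x hx
  · rw [card_image_of_injective _ (Equiv.injective _), h]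

lemma card_image_eq_le_of_card_eq (A : Finset α) {S T : Finset α} (h : #S = #T) :
    #{σ : Perm α | A.image σ = S} ≤ #{σ : Perm α | A.image σ = T} := by
  obtain ⟨π, hπ⟩ := exists_image_eq_of_card_eq h
  refine card_le_card_of_injOn (π * ·) (fun σ hσ => ?_) (mul_right_injective π).injOn
  simp only [coe_filter, Set.mem_ofPred_eq, mem_univ, true_and] at hσ ⊢
  rw [Perm.coe_mul, ← image_image, hσ, hπ]

lemma card_image_eq_congr (A : Finset α) {S T : Finset α} (h : #S = #T) :
    #{σ : Perm α | A.image σ = S} = #{σ : Perm α | A.image σ = T} :=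
  (card_image_eq_le_of_card_eq A h).antisymm (card_image_eq_le_of_card_eq A h.symm)

lemma card_image_eq_mul_choose (A : Finset α) {T : Finset α} (hT : #T = #A) :
    #{σ : Perm α | A.image σ = T} * (Fintype.card α).choose #A = (Fintype.card α)! := by
  have hfibres : (Fintype.card α)! =
      ∑ S ∈ powersetCard #A univ, #{σ : Perm α | A.image σ = S} := by
    rw [← Fintype.card_perm, ← Finset.card_univ]
    exact card_eq_sum_card_fiberwise fun σ _ => by
      simp [card_image_of_injective _ σ.injective]
  rw [sum_congr rfl fun S hS => card_image_eq_congr A ((mem_powersetCard.1 hS).2.trans hT.symm),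
    sum_const, card_powersetCard, Finset.card_univ, smul_eq_mul] at hfibres
  rw [hfibres, mul_comm]

lemma card_image_subset_mul_choose (A A' : Finset α) :
    #{σ : Perm α | A.image σ ⊆ A'} * (Fintype.card α).choose #A =
      (Fintype.card α)! * (#A').choose #A := by
  have hfibres : #{σ : Perm α | A.image σ ⊆ A'} =
      ∑ T ∈ powersetCard #A A', #{σ : Perm α | A.image σ = T} := by
    rw [card_eq_sum_card_fiberwise (f := fun σ : Perm α => A.image σ) (t := powersetCard #A A')
      fun σ hσ => by
      simpa [card_image_of_injective _ σ.injective] using hσ]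
    refine sum_congr rfl fun T hT => ?_
    rw [filter_filter]
    refine congrArg card (filter_congr fun σ _ => ⟨And.right, fun h => ⟨?_, h⟩⟩)
    exact h ▸ (mem_powersetCard.1 hT).1
  rw [hfibres, sum_mul, sum_congr rfl fun T hT =>
    card_image_eq_mul_choose A (mem_powersetCard.1 hT).2, sum_const, card_powersetCard,
    smul_eq_mul, mul_comm]

end Equiv.Perm

open Equiv.Perm in
/-- For subsets `A, A', B, B'` of `Fin n`, if `N` is the number of permutations `σ`
of `Fin n` with `σ(A) ⊆ A'` and `σ⁻¹(B) ⊆ B'`, then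
`N²·C(n,#A)·C(n,#B) ≤ (n!)²·C(#A',#A)·C(#B',#B)`. -/
theorem count_permutations_two_containments
    (n : ℕ) (A A' B B' : Finset (Fin n)) :
    (Nat.card {σ : Equiv.Perm (Fin n) // A.image σ ⊆ A' ∧ B.image (σ⁻¹ : Equiv.Perm (Fin n)) ⊆ B'}) ^ 2 *
        n.choose A.card * n.choose B.card ≤
      n.factorial ^ 2 * A'.card.choose A.card * B'.card.choose B.card := by
  have hN : Nat.card {σ : Perm (Fin n) // A.image σ ⊆ A' ∧ B.image ⇑σ⁻¹ ⊆ B'} =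
      #{σ : Perm (Fin n) | A.image σ ⊆ A' ∧ B.image ⇑σ⁻¹ ⊆ B'} := by
    rw [Nat.card_eq_fintype_card, Fintype.card_subtype]
  set N := Nat.card {σ : Perm (Fin n) // A.image σ ⊆ A' ∧ B.image ⇑σ⁻¹ ⊆ B'}
  have hNA : N ≤ #{σ : Perm (Fin n) | A.image σ ⊆ A'} :=
    hN ▸ card_le_card (monotone_filter_right _ fun _ _ h => h.1)
  have hNB : N ≤ #{σ : Perm (Fin n) | B.image σ ⊆ B'} :=
    card_filter_inv (fun σ : Perm (Fin n) => B.image σ ⊆ B') ▸ hN ▸ card_le_card (monotone_filter_right _ fun _ _ h => h.2)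
  have hA := card_image_subset_mul_choose A A'
  have hB := card_image_subset_mul_choose B B'
  rw [Fintype.card_fin] at hA hB
  calc N ^ 2 * n.choose #A * n.choose #B = (N * n.choose #A) * (N * n.choose #B) := by ring
    _ ≤ (#{σ : Perm (Fin n) | A.image σ ⊆ A'} * n.choose #A) *
        (#{σ : Perm (Fin n) | B.image σ ⊆ B'} * n.choose #B) := by gcongr
    _ = n ! ^ 2 * (#A').choose #A * (#B').choose #B := by rw [hA, hB]; ring
end

section
/- For every real C > 0 and every j ∈ ℕ there exists θ₀ > 0 such that for every θ with 0 < θ ≤ θ₀ there exist S₀, n₀ ∈ ℕ with the following property: for all n ≥ n₀ and all natural numbers s, s' with S₀ ≤ s, (s : ℝ) ≤ n·(1/2 + θ), and (s' : ℝ) ≤ θ·s, one has (C(n,s') : ℝ) ≤ n^{−j} · (C(n,s) : ℝ)^{1/C}. -/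
/-!
Write `T = log (n / s)`; as `s ≤ 2n/3`, `T ≥ log (3/2)`. The lower bound `(n/s)^s ≤ C(n,s)` gives
`log C(n,s) ≥ s T`, while `C(n,k) ≤ (e n / k)^k` together with the monotonicity of
`k ↦ k (1 + log (n/k))` on `[0, n]` gives `log C(n,s') ≤ s (θ (1 - log θ) + θ T)`. With
`j log n = j T + j log s`, each of the four terms `s θ (1 - log θ)`, `s θ T`, `j T`, `j log s` is
at most `s T / (4C)` once θ is small (`θ (1 - log θ) → 0`) and s is large (`log s = o(s)`).
-/

open Real Filter Topology

theorem Nat.pow_le_pow_mul_choose {s n : ℕ} (h : s ≤ n) : n ^ s ≤ s ^ s * n.choose s := by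
  induction s generalizing n with
  | zero => simp
  | succ s ih =>
    obtain ⟨m, rfl⟩ : ∃ m, n = m + 1 := ⟨n - 1, by omega⟩
    have hratio : (m + 1) ^ s * s ^ s ≤ (s + 1) ^ s * m ^ s := by
      rw [← Nat.mul_pow, ← Nat.mul_pow]
      exact Nat.pow_le_pow_left (by nlinarith) s
    refine Nat.le_of_mul_le_mul_right ?_ (Nat.pow_self_pos (n := s))
    calc (m + 1) ^ (s + 1) * s ^ s = (m + 1) * ((m + 1) ^ s * s ^ s) := by ring
      _ ≤ (m + 1) * ((s + 1) ^ s * (s ^ s * m.choose s)) :=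
        Nat.mul_le_mul_left _ (hratio.trans (Nat.mul_le_mul_left _ (ih (by omega))))
      _ = (s + 1) ^ s * s ^ s * ((m + 1) * m.choose s) := by ring
      _ = (s + 1) ^ (s + 1) * (m + 1).choose (s + 1) * s ^ s := by
        rw [Nat.add_one_mul_choose_eq]; ring

theorem Nat.div_pow_le_choose {α : Type*} [Field α] [LinearOrder α] [IsStrictOrderedRing α]
    {s n : ℕ} (h : s ≤ n) : ((n : α) / s) ^ s ≤ n.choose s := by
  rw [div_pow, div_le_iff₀ (mod_cast Nat.pow_self_pos), mul_comm]
  exact_mod_cast Nat.pow_le_pow_mul_choose h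

theorem Nat.choose_le_exp_mul_div_pow (n k : ℕ) : (n.choose k : ℝ) ≤ (exp 1 * n / k) ^ k := by
  have hk : (k : ℝ) ^ k ≠ 0 := mod_cast Nat.pow_self_pos.ne'
  calc (n.choose k : ℝ) ≤ n ^ k / k.factorial := Nat.choose_le_pow_div k n
    _ = (n / k) ^ k * (k ^ k / k.factorial) := by rw [div_pow]; field_simp
    _ ≤ (n / k) ^ k * exp k := by gcongr; exact pow_div_factorial_le_exp _ k.cast_nonneg k
    _ = (exp 1 * n / k) ^ k := by rw [← exp_one_pow]; ring

theorem mul_log_div_le_log_choose (n s : ℕ) : s * log (n / s) ≤ log (n.choose s) := by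
  rcases s.eq_zero_or_pos with rfl | hs
  · simp
  have hs : (0 : ℝ) < s := by exact_mod_cast hs
  by_cases hsn : s ≤ n
  · have hn : (0 : ℝ) < n := hs.trans_le (by exact_mod_cast hsn)
    rw [← log_pow]
    exact log_le_log (by positivity) (Nat.div_pow_le_choose hsn)
  · rw [Nat.choose_eq_zero_of_lt (not_le.1 hsn), Nat.cast_zero, log_zero]
    refine mul_nonpos_of_nonneg_of_nonpos hs.le (log_nonpos (by positivity) ?_)
    exact (div_le_one hs).2 (by exact_mod_cast (not_le.1 hsn).le)

theorem log_choose_le_mul_one_add_log {n k : ℕ} (hk : k ≤ n) :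
    log (n.choose k) ≤ k * (1 + log (n / k)) := by
  rcases k.eq_zero_or_pos with rfl | hk0
  · simp
  have hk0 : (0 : ℝ) < k := by exact_mod_cast hk0
  have hn : (0 : ℝ) < n := hk0.trans_le (by exact_mod_cast hk)
  have h := log_le_log (by exact_mod_cast Nat.choose_pos hk) (Nat.choose_le_exp_mul_div_pow n k)
  rwa [log_pow, mul_div_assoc, log_mul (exp_pos 1).ne' (div_pos hn hk0).ne', log_exp] at h

theorem mul_one_add_log_div_le_of_le {N a b : ℝ} (ha : 0 ≤ a) (hab : a ≤ b) (hbN : b ≤ N) :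
    a * (1 + log (N / a)) ≤ b * (1 + log (N / b)) := by
  rcases hab.eq_or_lt with rfl | hab'
  · rfl
  have hb : 0 < b := ha.trans_lt hab'
  have hNb : 0 ≤ log (N / b) := log_nonneg ((one_le_div hb).2 hbN)
  rcases ha.eq_or_lt with rfl | ha
  · simpa using mul_nonneg hb.le (by linarith)
  have hba : a * log (b / a) ≤ b - a := by
    have := mul_le_mul_of_nonneg_left (log_le_sub_one_of_pos (div_pos hb ha)) ha.le
    rwa [mul_sub, mul_div_cancel₀ _ ha.ne', mul_one] at this
  have hN : 0 < N := hb.trans_le hbN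
  rw [log_div hb.ne' ha.ne'] at hba
  rw [log_div hN.ne' ha.ne', log_div hN.ne' hb.ne'] at *
  nlinarith [mul_nonneg (sub_nonneg.2 hab) hNb]

theorem log_choose_le_of_le_mul {n s s' : ℕ} {θ : ℝ} (hθ : 0 < θ) (hs : 0 < s)
    (hθs : θ * s ≤ n) (hs' : (s' : ℝ) ≤ θ * s) :
    log (n.choose s') ≤ s * (θ * (1 - log θ) + θ * log (n / s)) := by
  have hs : (0 : ℝ) < s := by exact_mod_cast hs
  have hn : (0 : ℝ) < n := (mul_pos hθ hs).trans_le hθs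
  calc log (n.choose s') ≤ s' * (1 + log (n / s')) :=
        log_choose_le_mul_one_add_log (by exact_mod_cast hs'.trans hθs)
    _ ≤ θ * s * (1 + log (n / (θ * s))) := mul_one_add_log_div_le_of_le s'.cast_nonneg hs' hθs
    _ = s * (θ * (1 - log θ) + θ * log (n / s)) := by
      rw [div_mul_eq_div_div_swap, log_div (by positivity) hθ.ne']; ring

theorem eventually_mul_log_le_mul_self (a : ℝ) {ε : ℝ} (hε : 0 < ε) :
    ∀ᶠ x in atTop, a * log x ≤ ε * x := by
  filter_upwards [(isLittleO_log_id_atTop.const_mul_left a).bound hε, eventually_ge_atTop 0]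
    with x hx hx0
  simpa [abs_of_nonneg hx0] using (le_abs_self _).trans hx

theorem tendsto_mul_one_sub_log_nhds_zero :
    Tendsto (fun θ : ℝ => θ * (1 - log θ)) (𝓝 0) (𝓝 0) := by
  have h : Continuous fun θ : ℝ => θ - θ * log θ := continuous_id.sub continuous_mul_log
  simpa [mul_one_sub] using h.tendsto 0

theorem log_choose_add_mul_log_le {C c θ j : ℝ} {n s s' : ℕ} (hC : 0 < C) (hc : 0 ≤ c)
    (hθ : 0 < θ) (hθC : θ ≤ 1 / (4 * C)) (hθc : θ * (1 - log θ) ≤ c / (4 * C))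
    (hs : 0 < s) (hsj : 4 * C * j ≤ s) (hsc : j * log s ≤ c / (4 * C) * s)
    (hθs : θ * s ≤ n) (hcT : c ≤ log (n / s)) (hs' : (s' : ℝ) ≤ θ * s) :
    log (n.choose s') + j * log n ≤ 1 / C * log (n.choose s) := by
  have hs0 : (0 : ℝ) < s := by exact_mod_cast hs
  have hn : (0 : ℝ) < n := (mul_pos hθ hs0).trans_le hθs
  set T := log (n / s) with hT
  have hlogn : log n = T + log s := by rw [hT, log_div hn.ne' hs0.ne']; ring
  have hT0 : 0 ≤ T := hc.trans hcT
  have hcT' : c / (4 * C) ≤ T / (4 * C) := by gcongr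
  have hj : (j : ℝ) ≤ s / (4 * C) := (le_div_iff₀' (by positivity)).2 hsj
  calc log (n.choose s') + j * log n
      ≤ s * (θ * (1 - log θ)) + s * (θ * T) + j * T + j * log s := by
        rw [hlogn]; linarith [log_choose_le_of_le_mul hθ hs hθs hs']
    _ ≤ s * (T / (4 * C)) + s * (T / (4 * C)) + s / (4 * C) * T + T / (4 * C) * s := by
        refine add_le_add (add_le_add (add_le_add ?_ ?_) ?_) (hsc.trans (by gcongr))
        · exact mul_le_mul_of_nonneg_left (hθc.trans hcT') hs0.le
        · rw [← one_div_mul_eq_div]; gcongr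
        · gcongr
    _ = 1 / C * (s * T) := by field_simp; ring
    _ ≤ 1 / C * log (n.choose s) := by gcongr; exact mul_log_div_le_log_choose n s

theorem le_rpow_neg_mul_rpow_of_log_le {x N y a b : ℝ} (hx : 0 < x) (hN : 0 < N) (hy : 0 < y)
    (h : log x + a * log N ≤ b * log y) : x ≤ N ^ (-a) * y ^ b := by
  rw [← log_le_log_iff hx (by positivity), log_mul (by positivity) (by positivity),
    log_rpow hN, log_rpow hy]
  linarith

/-- Binomial coefficient estimate: for every `C > 0` and `j ∈ ℕ`, for all sufficiently
small `θ > 0` there are `S₀, n₀ ∈ ℕ` such that for all `n ≥ n₀` and all `s, s'` with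
`S₀ ≤ s`, `s ≤ n(1/2 + θ)` and `s' ≤ θ·s`, one has `C(n,s') ≤ n^{−j}·C(n,s)^{1/C}`. -/
theorem binom_coeff_estimate (C : ℝ) (hC : 0 < C) (j : ℕ) :
    ∃ θ₀ : ℝ, 0 < θ₀ ∧ ∀ θ : ℝ, 0 < θ → θ ≤ θ₀ →
      ∃ S₀ n₀ : ℕ, ∀ n : ℕ, n₀ ≤ n → ∀ s s' : ℕ,
        S₀ ≤ s → (s : ℝ) ≤ (n : ℝ) * (1 / 2 + θ) → (s' : ℝ) ≤ θ * (s : ℝ) →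
        (n.choose s' : ℝ) ≤ (n : ℝ) ^ (-(j : ℝ)) * (n.choose s : ℝ) ^ (1 / C) := by
  have hc : 0 < log (3 / 2) := log_pos (by norm_num)
  have hθ_small : ∀ᶠ θ in 𝓝[>] (0 : ℝ),
      θ ≤ 1 / 6 ∧ θ ≤ 1 / (4 * C) ∧ θ * (1 - log θ) ≤ log (3 / 2) / (4 * C) :=
    nhdsWithin_le_nhds <| (eventually_le_nhds (by norm_num)).and <|
      (eventually_le_nhds (by positivity)).and <|
        (tendsto_mul_one_sub_log_nhds_zero.eventually_lt_const (by positivity)).mono fun _ ↦ le_of_lt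
  obtain ⟨θ₀, hθ₀, hθ₀_small⟩ := (nhdsGT_basis_Ioc 0).eventually_iff.1 hθ_small
  refine ⟨θ₀, hθ₀, fun θ hθ hθθ₀ ↦ ?_⟩
  obtain ⟨hθ6, hθC, hθc⟩ := hθ₀_small ⟨hθ, hθθ₀⟩
  have hs_large : ∀ᶠ s : ℕ in atTop,
      0 < s ∧ 4 * C * j ≤ s ∧ j * log s ≤ log (3 / 2) / (4 * C) * s :=
    (eventually_gt_atTop 0).and <| tendsto_natCast_atTop_atTop.eventually <|
      (eventually_ge_atTop _).and (eventually_mul_log_le_mul_self _ (by positivity))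
  obtain ⟨S₀, hS₀⟩ := eventually_atTop.1 hs_large
  refine ⟨S₀, 0, fun n _ s s' hS₀s hsn hs' ↦ ?_⟩
  obtain ⟨hs, hsj, hsc⟩ := hS₀ s hS₀s
  have hs0 : (0 : ℝ) < s := by exact_mod_cast hs
  have hθs : θ * s ≤ n := by nlinarith
  have hcT : log (3 / 2) ≤ log (n / s) :=
    log_le_log (by norm_num) ((le_div_iff₀ hs0).2 (by nlinarith))
  have hs'n : s' ≤ n := by exact_mod_cast hs'.trans hθs
  have hsn' : s ≤ n := by exact_mod_cast (by nlinarith : (s : ℝ) ≤ n)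
  refine le_rpow_neg_mul_rpow_of_log_le (mod_cast Nat.choose_pos hs'n) (by nlinarith)
    (mod_cast Nat.choose_pos hsn') ?_
  exact log_choose_add_mul_log_le hC hc.le hθ hθC hθc hs hsj hsc hθs hcT hs'
end

section
/- Let n ∈ ℕ and let W ⊆ W' ⊆ Fin n with w = #W and w' = #W'. Let s'' be the largest even natural number with (s'' : ℤ) ≤ 2w − w' − 1 (taking s'' = 0 if 2w − w' − 1 ≤ 0). Let I_n be the set of involutions of Fin n with no fixed point if n is even, and with exactly one fixed point if n is odd. Then (as an inequality of rationals) #{σ ∈ I_n : σ(W) ⊆ W'} · binom(n,s'')_odd ≤ #I_n · C(w, s''). Equivalently, for σ chosen uniformly at random from I_n, the probability that σ(W) ⊆ W' is at most C(w,s'')/binom(n,s'')_odd. -/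
open scoped BigOperators

/-- The odd binomial coefficient `binom(n,t)_odd = ((n−1)(n−3)⋯(n−t+1))/((t−1)(t−3)⋯1)`,
for `t` even, where numerator and denominator each have `t/2` factors. -/
noncomputable def oddBinom (n t : ℕ) : ℚ :=
  (∏ i ∈ Finset.range (t / 2), ((n : ℚ) - (2 * i + 1))) /
    (∏ i ∈ Finset.range (t / 2), ((t : ℚ) - (2 * i + 1)))

/-- `σ` is a perfect matching of `Fin n` when `n` is even, and a near perfect matching
(an involution with exactly one fixed point) when `n` is odd. -/
def IsNearPerfectMatching {n : ℕ} (σ : Equiv.Perm (Fin n)) : Prop :=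
  σ * σ = 1 ∧ Nat.card {x : Fin n // σ x = x} = (if Even n then 0 else 1)

/-!
If `σ(W) ⊆ W'`, at most `#W' - #W` points of `W` are sent outside `W` and at most one is fixed,
so the `2`-cycles of `σ` inside `W` cover at least `2#W - #W' - 1` points and `W` contains a union
`S` of `s''/2` of them. Then `σ` is determined by `S` (at most `C(w, s'')` choices), by a perfect
matching of `S` and by a near perfect matching of its complement. Writing `M m` for the number of
near perfect matchings of `Fin m`, this gives `C(w, s'') · M s'' · M (n - s'')` as a bound. The
recursion `(m + 1) · M m ≤ M (m + 2)`, an equality for even `m`, then yields `M s'' ≤ (s'' - 1)‼`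
and `M (n - s'') · (n - 1)(n - 3)⋯(n - s'' + 1) ≤ M n`.
-/

open Equiv Finset

namespace Equiv.Perm

variable {α : Type*}

theorem apply_apply_of_mul_self_eq_one {σ : Perm α} (hσ : σ * σ = 1) (x : α) : σ (σ x) = x :=
  Perm.ext_iff.mp hσ x

def IsUnionOfPairs (σ : Perm α) (S : Finset α) : Prop :=
  (∀ x, σ x ∈ S ↔ x ∈ S) ∧ ∀ x ∈ S, σ x ≠ x

variable [DecidableEq α] {σ : Perm α} {S T : Finset α}

theorem IsUnionOfPairs.union (hS : σ.IsUnionOfPairs S) (hT : σ.IsUnionOfPairs T) :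
    σ.IsUnionOfPairs (S ∪ T) :=
  ⟨fun x => by simp only [mem_union, hS.1, hT.1],
    fun x hx => (mem_union.mp hx).elim (hS.2 x) (hT.2 x)⟩

theorem IsUnionOfPairs.sdiff (hS : σ.IsUnionOfPairs S) (hT : σ.IsUnionOfPairs T) :
    σ.IsUnionOfPairs (S \ T) :=
  ⟨fun x => by simp only [mem_sdiff, hS.1, hT.1], fun x hx => hS.2 x (mem_sdiff.mp hx).1⟩

theorem isUnionOfPairs_pair (hσ : σ * σ = 1) {x : α} (hx : σ x ≠ x) :
    σ.IsUnionOfPairs {x, σ x} := by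
  refine ⟨fun z => ?_, fun z hz => ?_⟩
  · simp only [mem_insert, mem_singleton]
    constructor
    · rintro (h | h)
      · rw [← h, apply_apply_of_mul_self_eq_one hσ]; exact Or.inr rfl
      · exact Or.inl (σ.injective h)
    · rintro (rfl | rfl)
      · exact Or.inr rfl
      · exact Or.inl (apply_apply_of_mul_self_eq_one hσ x)
  · simp only [mem_insert, mem_singleton] at hz
    rcases hz with rfl | rfl
    · exact hx
    · rw [apply_apply_of_mul_self_eq_one hσ]; exact hx.symm

theorem IsUnionOfPairs.exists_subset_card_eq (hσ : σ * σ = 1) (hT : σ.IsUnionOfPairs T)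
    {k : ℕ} (hk : 2 * k ≤ #T) : ∃ S ⊆ T, σ.IsUnionOfPairs S ∧ #S = 2 * k := by
  induction k generalizing T with
  | zero => exact ⟨∅, empty_subset _, ⟨by simp, by simp⟩, rfl⟩
  | succ k ih =>
    obtain ⟨x, hx⟩ := card_pos.mp (by omega : 0 < #T)
    have hpair := isUnionOfPairs_pair hσ (hT.2 x hx)
    have hpairT : {x, σ x} ⊆ T := insert_subset hx (singleton_subset_iff.mpr ((hT.1 x).mpr hx))
    have hpair_card : #{x, σ x} = 2 := card_pair (hT.2 x hx).symm
    obtain ⟨S, hST, hS, hS_card⟩ := ih (hT.sdiff hpair)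
      (by rw [card_sdiff_of_subset hpairT]; omega)
    refine ⟨{x, σ x} ∪ S, union_subset hpairT (hST.trans sdiff_subset), hpair.union hS, ?_⟩
    rw [card_union_of_disjoint (disjoint_of_subset_right hST disjoint_sdiff), hpair_card, hS_card]
    ring

theorem card_fixed_add_card_support [Fintype α] (σ : Perm α) :
    Nat.card {x // σ x = x} + #σ.support = Fintype.card α := by
  rw [Nat.card_eq_fintype_card, Fintype.card_subtype, ← card_univ, support,
    card_filter_add_card_filter_not]

end Equiv.Perm

open Equiv.Perm

noncomputable def numNearPerfectMatchings (n : ℕ) : ℕ :=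
  Nat.card {σ : Perm (Fin n) // IsNearPerfectMatching σ}

theorem IsNearPerfectMatching.apply_ne {n : ℕ} {σ : Perm (Fin n)} (hσ : IsNearPerfectMatching σ)
    (hn : Even n) (x : Fin n) : σ x ≠ x := by
  have h := hσ.2
  rw [if_pos hn, Nat.card_eq_fintype_card, Fintype.card_eq_zero_iff] at h
  exact fun hx => h.false ⟨x, hx⟩

section Restriction

variable {n s : ℕ} {σ τ : Perm (Fin n)} {S : Finset (Fin n)}

noncomputable def restrictFin (σ : Perm (Fin n)) (hS : ∀ x, σ x ∈ S ↔ x ∈ S) (hc : #S = s) :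
    Perm (Fin s) :=
  (S.equivFinOfCardEq hc).permCongr (σ.subtypePerm hS)

theorem restrictFin_mul_self (hσ : σ * σ = 1) (hS : ∀ x, σ x ∈ S ↔ x ∈ S) (hc : #S = s) :
    restrictFin σ hS hc * restrictFin σ hS hc = 1 := by
  rw [restrictFin, ← permCongr_mul, subtypePerm_mul]
  ext x
  simp [hσ]

theorem card_fixed_restrictFin (hS : ∀ x, σ x ∈ S ↔ x ∈ S) (hc : #S = s) :
    Nat.card {y // restrictFin σ hS hc y = y} = Nat.card {x // x ∈ S ∧ σ x = x} := by
  refine Nat.card_congr ((Equiv.subtypeEquiv (S.equivFinOfCardEq hc).symm fun y => ?_).trans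
    (Equiv.subtypeSubtypeEquivSubtypeInter (· ∈ S) (fun x => σ x = x)))
  simp [restrictFin, Equiv.permCongr_apply, ← Equiv.eq_symm_apply, Subtype.ext_iff]

theorem eqOn_of_restrictFin_eq (hσS : ∀ x, σ x ∈ S ↔ x ∈ S) (hτS : ∀ x, τ x ∈ S ↔ x ∈ S)
    (hc : #S = s) (h : restrictFin σ hσS hc = restrictFin τ hτS hc) : ∀ x ∈ S, σ x = τ x := by
  intro x hx
  have := congr($h (S.equivFinOfCardEq hc ⟨x, hx⟩))
  simpa [restrictFin, Equiv.permCongr_apply] using this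

end Restriction

section Decomposition

variable {n s : ℕ} {σ : Perm (Fin n)} {S : Finset (Fin n)}

theorem isNearPerfectMatching_restrictFin (hσ : IsNearPerfectMatching σ)
    (hS : σ.IsUnionOfPairs S) (hc : #S = s) (hs : Even s) :
    IsNearPerfectMatching (restrictFin σ hS.1 hc) := by
  refine ⟨restrictFin_mul_self hσ.1 hS.1 hc, ?_⟩
  rw [card_fixed_restrictFin, if_pos hs, Nat.card_eq_zero]
  exact Or.inl ⟨fun x => hS.2 x.1 x.2.1 x.2.2⟩

theorem isNearPerfectMatching_restrictFin_compl (hσ : IsNearPerfectMatching σ)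
    (hS : σ.IsUnionOfPairs S) (hc : #Sᶜ = n - s) (hs : Even s) (hsn : s ≤ n) :
    IsNearPerfectMatching (restrictFin σ (fun x => by simp [hS.1 x]) hc) := by
  refine ⟨restrictFin_mul_self hσ.1 _ hc, ?_⟩
  have hfix : Nat.card {x // x ∈ Sᶜ ∧ σ x = x} = Nat.card {x // σ x = x} :=
    Nat.card_congr (Equiv.subtypeEquivRight fun x =>
      ⟨And.right, fun hx => ⟨mem_compl.mpr fun hxS => hS.2 x hxS hx, hx⟩⟩)
  rw [card_fixed_restrictFin, hfix, hσ.2]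
  simp [Nat.even_sub hsn, hs]

theorem card_isUnionOfPairs_le (hc : #S = s) (hs : Even s) :
    Nat.card {σ : Perm (Fin n) // IsNearPerfectMatching σ ∧ σ.IsUnionOfPairs S} ≤
      numNearPerfectMatchings s * numNearPerfectMatchings (n - s) := by
  have hsn : s ≤ n := hc ▸ (card_le_univ S).trans_eq (Fintype.card_fin n)
  have hcc : #Sᶜ = n - s := by rw [card_compl, hc, Fintype.card_fin]
  let restrictions (σ : {σ : Perm (Fin n) // IsNearPerfectMatching σ ∧ σ.IsUnionOfPairs S}) :
      {τ : Perm (Fin s) // IsNearPerfectMatching τ} ×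
        {τ : Perm (Fin (n - s)) // IsNearPerfectMatching τ} :=
    (⟨_, isNearPerfectMatching_restrictFin σ.2.1 σ.2.2 hc hs⟩,
      ⟨_, isNearPerfectMatching_restrictFin_compl σ.2.1 σ.2.2 hcc hs hsn⟩)
  rw [numNearPerfectMatchings, numNearPerfectMatchings, ← Nat.card_prod]
  refine Nat.card_le_card_of_injective restrictions fun σ τ h => ?_
  have hon := eqOn_of_restrictFin_eq _ _ hc congr(($h).1.1)
  have hoff := eqOn_of_restrictFin_eq _ _ hcc congr(($h).2.1)
  refine Subtype.ext (Equiv.ext fun x => ?_)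
  by_cases hx : x ∈ S
  · exact hon x hx
  · exact hoff x (mem_compl.mpr hx)

theorem card_le_card_mul_of_forall_exists_isUnionOfPairs (P : Perm (Fin n) → Prop)
    (𝒮 : Finset (Finset (Fin n))) (h𝒮 : ∀ S ∈ 𝒮, #S = s) (hs : Even s)
    (hP : ∀ σ, P σ → IsNearPerfectMatching σ ∧ ∃ S ∈ 𝒮, σ.IsUnionOfPairs S) :
    Nat.card {σ // P σ} ≤
      #𝒮 * (numNearPerfectMatchings s * numNearPerfectMatchings (n - s)) := by
  classical
  calc Nat.card {σ // P σ} = #{σ | P σ} := by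
        rw [Nat.card_eq_fintype_card, Fintype.card_subtype]
    _ ≤ #(𝒮.biUnion fun S => {σ | IsNearPerfectMatching σ ∧ σ.IsUnionOfPairs S}) := by
        refine card_le_card fun σ hσ => ?_
        obtain ⟨hσ, S, hS𝒮, hS⟩ := hP σ (mem_filter.mp hσ).2
        exact mem_biUnion.mpr ⟨S, hS𝒮, mem_filter.mpr ⟨mem_univ σ, hσ, hS⟩⟩
    _ ≤ ∑ S ∈ 𝒮, #{σ | IsNearPerfectMatching σ ∧ σ.IsUnionOfPairs S} := card_biUnion_le
    _ ≤ #𝒮 * (numNearPerfectMatchings s * numNearPerfectMatchings (n - s)) := by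
        refine sum_le_card_nsmul _ _ _ fun S hS => ?_
        rw [← Fintype.card_subtype, ← Nat.card_eq_fintype_card]
        exact card_isUnionOfPairs_le (h𝒮 S hS) hs

end Decomposition

theorem numNearPerfectMatchings_zero_le_one : numNearPerfectMatchings 0 ≤ 1 :=
  Finite.card_le_one_iff_subsingleton.mpr inferInstance

theorem numNearPerfectMatchings_two_le_one : numNearPerfectMatchings 2 ≤ 1 := by
  refine Finite.card_le_one_iff_subsingleton.mpr
    ⟨fun ⟨σ, hσ⟩ ⟨τ, hτ⟩ => Subtype.ext (Equiv.ext fun x => ?_)⟩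
  change σ x = τ x
  have := hσ.apply_ne even_two x
  have := hτ.apply_ne even_two x
  omega

theorem numNearPerfectMatchings_add_two_le {m : ℕ} (hm : Even m) :
    numNearPerfectMatchings (m + 2) ≤ (m + 1) * numNearPerfectMatchings m := by
  classical
  let pairs : Finset (Finset (Fin (m + 2))) := (univ.erase (Fin.last (m + 1))).image
    fun y => {Fin.last (m + 1), y}
  have hpairs : #pairs ≤ m + 1 := card_image_le.trans (by simp)
  have hcover := card_le_card_mul_of_forall_exists_isUnionOfPairs IsNearPerfectMatching pairs
    (s := 2) (by simp +contextual [pairs, eq_comm]) even_two fun σ hσ => by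
      have hfree := hσ.apply_ne (by simpa [Nat.even_add] using hm)
      exact ⟨hσ, _, mem_image_of_mem _ (mem_erase.mpr ⟨hfree _, mem_univ _⟩),
        isUnionOfPairs_pair hσ.1 (hfree _)⟩
  calc numNearPerfectMatchings (m + 2)
      ≤ #pairs * (numNearPerfectMatchings 2 * numNearPerfectMatchings m) := hcover
    _ ≤ (m + 1) * (1 * numNearPerfectMatchings m) := by
        gcongr
        exact numNearPerfectMatchings_two_le_one
    _ = (m + 1) * numNearPerfectMatchings m := by rw [one_mul]

section Extension

variable {m : ℕ} {y : Fin (m + 2)}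

theorem card_compl_pair_last (hy : y ≠ Fin.last (m + 1)) : #({Fin.last (m + 1), y}ᶜ) = m := by
  rw [card_compl, card_pair hy.symm, Fintype.card_fin, Nat.add_sub_cancel]

noncomputable def extendByPair (hy : y ≠ Fin.last (m + 1)) (τ : Perm (Fin m)) :
    Perm (Fin (m + 2)) :=
  swap (Fin.last (m + 1)) y * τ.extendDomain ((equivFinOfCardEq (card_compl_pair_last hy)).symm)

variable (hy : y ≠ Fin.last (m + 1)) (τ : Perm (Fin m))

theorem disjoint_swap_extendDomain :
    (swap (Fin.last (m + 1)) y).Disjoint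
      (τ.extendDomain ((equivFinOfCardEq (card_compl_pair_last hy)).symm)) := by
  intro z
  by_cases hz : z ∈ ({Fin.last (m + 1), y}ᶜ : Finset (Fin (m + 2)))
  · simp only [mem_compl, mem_insert, mem_singleton, not_or] at hz
    exact Or.inl (swap_apply_of_ne_of_ne hz.1 hz.2)
  · exact Or.inr (extendDomain_apply_not_subtype _ _ hz)

theorem extendByPair_last : extendByPair hy τ (Fin.last (m + 1)) = y := by
  rw [extendByPair, Perm.mul_apply, extendDomain_apply_not_subtype _ _ (by simp),
    swap_apply_left]

theorem isNearPerfectMatching_extendByPair (hτ : IsNearPerfectMatching τ) :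
    IsNearPerfectMatching (extendByPair hy τ) := by
  have hdisj := disjoint_swap_extendDomain hy τ
  refine ⟨?_, ?_⟩
  · rw [extendByPair, mul_assoc, ← mul_assoc _ (swap _ _), ← hdisj.commute.eq, mul_assoc,
      ← mul_assoc, swap_mul_self, one_mul, extendDomain_mul, hτ.1, extendDomain_one]
  · have hsupp : #(extendByPair hy τ).support = 2 + #τ.support := by
      rw [extendByPair, hdisj.card_support_mul, card_support_swap hy.symm,
        card_support_extend_domain]
    have h₁ := card_fixed_add_card_support (extendByPair hy τ)
    have h₂ := card_fixed_add_card_support τ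
    rw [Fintype.card_fin] at h₁ h₂
    rw [show Nat.card {x // extendByPair hy τ x = x} = Nat.card {x // τ x = x} by omega, hτ.2]
    simp [Nat.even_add]

end Extension

theorem le_numNearPerfectMatchings_add_two (m : ℕ) :
    (m + 1) * numNearPerfectMatchings m ≤ numNearPerfectMatchings (m + 2) := by
  let extend (p : {y : Fin (m + 2) // y ≠ Fin.last (m + 1)} ×
      {τ : Perm (Fin m) // IsNearPerfectMatching τ}) :
      {σ : Perm (Fin (m + 2)) // IsNearPerfectMatching σ} :=
    ⟨extendByPair p.1.2 p.2.1, isNearPerfectMatching_extendByPair p.1.2 p.2.1 p.2.2⟩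
  have hinj : Function.Injective extend := by
    rintro ⟨⟨y, hy⟩, τ⟩ ⟨⟨y', hy'⟩, τ'⟩ h
    have h' : extendByPair hy τ.1 = extendByPair hy' τ'.1 := congr_arg Subtype.val h
    obtain rfl : y = y' := by rw [← extendByPair_last hy τ.1, h', extendByPair_last]
    have hext := mul_left_cancel h'
    obtain rfl : τ = τ' := Subtype.ext (extendDomainHom_injective _ hext)
    rfl
  calc (m + 1) * numNearPerfectMatchings m
      = Nat.card ({y : Fin (m + 2) // y ≠ Fin.last (m + 1)} ×
          {τ : Perm (Fin m) // IsNearPerfectMatching τ}) := by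
        rw [Nat.card_prod, Nat.card_eq_fintype_card, Fintype.card_subtype_compl]
        simp [numNearPerfectMatchings]
    _ ≤ numNearPerfectMatchings (m + 2) := Nat.card_le_card_of_injective extend hinj

def oddDescFactorial (n k : ℕ) : ℕ :=
  ∏ i ∈ range k, (n - (2 * i + 1))

theorem oddDescFactorial_add_two_succ (n k : ℕ) :
    oddDescFactorial (n + 2) (k + 1) = oddDescFactorial n k * (n + 1) := by
  rw [oddDescFactorial, prod_range_succ']
  exact congr_arg₂ (· * ·) (prod_congr rfl fun i _ => by omega) (by omega)

theorem oddDescFactorial_pos {n k : ℕ} (h : 2 * k ≤ n) : 0 < oddDescFactorial n k :=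
  prod_pos fun i hi => by simp only [mem_range] at hi; omega

theorem numNearPerfectMatchings_two_mul_le (k : ℕ) :
    numNearPerfectMatchings (2 * k) ≤ oddDescFactorial (2 * k) k := by
  induction k with
  | zero => exact numNearPerfectMatchings_zero_le_one
  | succ k ih =>
    rw [mul_add_one, oddDescFactorial_add_two_succ, mul_comm _ (2 * k + 1)]
    exact (numNearPerfectMatchings_add_two_le (even_two_mul k)).trans (Nat.mul_le_mul_left _ ih)

theorem numNearPerfectMatchings_mul_oddDescFactorial_le (m k : ℕ) :
    numNearPerfectMatchings m * oddDescFactorial (m + 2 * k) k ≤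
      numNearPerfectMatchings (m + 2 * k) := by
  induction k with
  | zero => simp [oddDescFactorial]
  | succ k ih =>
    rw [mul_add_one, ← add_assoc, oddDescFactorial_add_two_succ, ← mul_assoc, mul_comm]
    exact (Nat.mul_le_mul_left _ ih).trans (le_numNearPerfectMatchings_add_two _)

theorem oddBinom_two_mul {n k : ℕ} (h : 2 * k ≤ n) :
    oddBinom n (2 * k) = oddDescFactorial n k / oddDescFactorial (2 * k) k := by
  have hcast (m : ℕ) (hm : 2 * k ≤ m) :
      ∏ i ∈ range k, ((m : ℚ) - (2 * i + 1)) = oddDescFactorial m k := by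
    rw [oddDescFactorial, Nat.cast_prod]
    refine prod_congr rfl fun i hi => ?_
    rw [Nat.cast_sub (by simp only [mem_range] at hi; omega)]
    push_cast
    ring
  rw [oddBinom, Nat.mul_div_cancel_left k two_pos, hcast n h, hcast (2 * k) le_rfl]

theorem IsNearPerfectMatching.exists_isUnionOfPairs_of_image_subset {n : ℕ}
    {σ : Perm (Fin n)} (hσ : IsNearPerfectMatching σ) {W W' : Finset (Fin n)} (hWW' : W ⊆ W')
    (him : W.image σ ⊆ W') :
    ∃ S ∈ W.powersetCard (2 * ((2 * #W - #W' - 1) / 2)), σ.IsUnionOfPairs S := by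
  classical
  set T := W.filter fun x => σ x ∈ W ∧ σ x ≠ x
  have hT : σ.IsUnionOfPairs T := by
    refine ⟨fun x => ?_, fun x hx => (mem_filter.mp hx).2.2⟩
    simp only [T, mem_filter, apply_apply_of_mul_self_eq_one hσ.1]
    exact ⟨fun ⟨h₁, h₂, h₃⟩ => ⟨h₂, h₁, Ne.symm h₃⟩, fun ⟨h₁, h₂, h₃⟩ => ⟨h₂, h₁, Ne.symm h₃⟩⟩
  have hleave : #(W.filter fun x => σ x ∉ W) ≤ #W' - #W := by
    rw [← card_sdiff_of_subset hWW']
    refine card_le_card_of_injOn σ (fun x hx => ?_) σ.injective.injOn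
    have hx := mem_filter.mp hx
    exact mem_sdiff.mpr ⟨him (mem_image_of_mem σ hx.1), hx.2⟩
  have hfixed : #(W.filter fun x => σ x = x) ≤ 1 := by
    calc #(W.filter fun x => σ x = x) ≤ #(univ.filter fun x => σ x = x) :=
          card_le_card (filter_subset_filter _ (subset_univ W))
      _ = Nat.card {x // σ x = x} := by rw [Nat.card_eq_fintype_card, Fintype.card_subtype]
      _ ≤ 1 := by rw [hσ.2]; split <;> omega
  have hW : #W ≤ #T + (#(W.filter fun x => σ x ∉ W) + #(W.filter fun x => σ x = x)) := by
    rw [← card_filter_add_card_filter_not (fun x => σ x ∈ W ∧ σ x ≠ x)]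
    refine Nat.add_le_add_left ((card_le_card fun x hx => ?_).trans (card_union_le _ _)) _
    simp only [mem_filter, not_and_or, not_not, mem_union] at hx ⊢
    tauto
  obtain ⟨S, hST, hS, hS_card⟩ := hT.exists_subset_card_eq hσ.1
    (k := (2 * #W - #W' - 1) / 2) (by have := card_le_card hWW'; omega)
  exact ⟨S, mem_powersetCard.mpr ⟨hST.trans (filter_subset _ _), hS_card⟩, hS⟩

theorem card_image_subset_mul_oddDescFactorial_le {n : ℕ} {W W' : Finset (Fin n)}
    (hWW' : W ⊆ W') (k : ℕ) (hk : k = (2 * #W - #W' - 1) / 2) :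
    Nat.card {σ : Perm (Fin n) // IsNearPerfectMatching σ ∧ W.image σ ⊆ W'} *
        oddDescFactorial n k ≤
      numNearPerfectMatchings n * (#W).choose (2 * k) * oddDescFactorial (2 * k) k := by
  have hkn : 2 * k ≤ n := by
    have := card_le_card hWW'
    have := (card_le_univ W).trans_eq (Fintype.card_fin n)
    omega
  have hcount := card_le_card_mul_of_forall_exists_isUnionOfPairs
    (fun σ => IsNearPerfectMatching σ ∧ W.image σ ⊆ W') (W.powersetCard (2 * k))
    (fun S hS => (mem_powersetCard.mp hS).2) (even_two_mul k)
    fun σ hσ => ⟨hσ.1, hk ▸ hσ.1.exists_isUnionOfPairs_of_image_subset hWW' hσ.2⟩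
  have hlower := numNearPerfectMatchings_mul_oddDescFactorial_le (n - 2 * k) k
  rw [card_powersetCard] at hcount
  rw [Nat.sub_add_cancel hkn] at hlower
  calc _ ≤ (#W).choose (2 * k) * (numNearPerfectMatchings (2 * k) *
        numNearPerfectMatchings (n - 2 * k)) * oddDescFactorial n k := by gcongr
    _ = (#W).choose (2 * k) * numNearPerfectMatchings (2 * k) *
        (numNearPerfectMatchings (n - 2 * k) * oddDescFactorial n k) := by ring
    _ ≤ (#W).choose (2 * k) * oddDescFactorial (2 * k) k * numNearPerfectMatchings n := by
        gcongr
        exact numNearPerfectMatchings_two_mul_le k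
    _ = _ := by ring

/-- For `W ⊆ W' ⊆ Fin n`, setting `s''` to be the largest even natural number with
`s'' ≤ 2·#W − #W' − 1` (zero if this is nonpositive), the number of (near) perfect
matchings `σ` of `Fin n` with `σ(W) ⊆ W'`, times `binom(n,s'')_odd`, is at most
the total number of (near) perfect matchings times `C(#W,s'')`; i.e. the probability
that a uniformly random (near) perfect matching maps `W` into `W'` is at most
`C(#W,s'')/binom(n,s'')_odd`. -/
theorem matching_probability_bound
    (n : ℕ) (W W' : Finset (Fin n)) (hWW' : W ⊆ W') :
    (Nat.card {σ : Equiv.Perm (Fin n) //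
          IsNearPerfectMatching σ ∧ W.image σ ⊆ W'} : ℚ) *
        oddBinom n (2 * ((2 * W.card - W'.card - 1) / 2)) ≤
      (Nat.card {σ : Equiv.Perm (Fin n) // IsNearPerfectMatching σ} : ℚ) *
        (W.card.choose (2 * ((2 * W.card - W'.card - 1) / 2)) : ℚ) := by
  set k := (2 * #W - #W' - 1) / 2 with hk
  have hkn : 2 * k ≤ n := by
    have := card_le_card hWW'
    have := (card_le_univ W).trans_eq (Fintype.card_fin n)
    omega
  have hpos : (0 : ℚ) < oddDescFactorial (2 * k) k := by
    exact_mod_cast oddDescFactorial_pos le_rfl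
  rw [oddBinom_two_mul hkn, mul_div_assoc', div_le_iff₀ hpos]
  exact_mod_cast card_image_subset_mul_oddDescFactorial_le hWW' k hk
end

section
/- Let G be a finite simple graph with N vertices, let R ≥ 1 be a natural number and γ > 0 a real. Suppose that (i) every vertex subset U with R ≤ #U ≤ N/2 satisfies #(Γ_G(U) ∖ U) ≥ γ·#U, and (ii) every connected component of G contains more than R vertices. Then G is a min(γ, 1/R)-magnifier: every nonempty vertex subset U with #U ≤ N/2 satisfies #(Γ_G(U) ∖ U) ≥ min(γ, 1/R)·#U. -/
section

variable {W : Type*} {G : SimpleGraph W} {U : Set W}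

lemma supp_subset_of_nbhd_diff_eq_empty (hU : nbhd G U \ U = ∅) {u : W} (hu : u ∈ U) :
    (G.connectedComponentMk u).supp ⊆ U := by
  have hclosed : ∀ a ∈ U, ∀ b, G.Adj a b → b ∈ U := fun a ha b hab =>
    Set.sdiff_eq_empty.mp hU ⟨a, ha, hab⟩
  intro w hw
  obtain ⟨p⟩ := SimpleGraph.ConnectedComponent.eq.mp hw.symm
  clear hw
  induction p with
  | nil => exact hu
  | cons hadj _ ih => exact ih (hclosed _ hu _ hadj)

lemma nbhd_diff_nonempty_of_ncard_lt [Finite W] (hU : U.Nonempty)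
    (hcomp : ∀ c : G.ConnectedComponent, U.ncard < c.supp.ncard) :
    (nbhd G U \ U).Nonempty := by
  rw [Set.nonempty_iff_ne_empty]
  intro hempty
  obtain ⟨u, hu⟩ := hU
  have hsub := supp_subset_of_nbhd_diff_eq_empty hempty hu
  exact (hcomp _).not_ge (Set.ncard_le_ncard hsub)

end

theorem pseudo_magnifier_is_magnifier_general
    {W : Type} [Fintype W] (G : SimpleGraph W) (R : ℕ)
    (γ : ℝ)
    (h1 : ∀ U : Set W, R ≤ U.ncard → (U.ncard : ℝ) ≤ (Fintype.card W : ℝ) / 2 →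
      γ * (U.ncard : ℝ) ≤ (((nbhd G U) \ U).ncard : ℝ))
    (h2 : ∀ c : G.ConnectedComponent, R < c.supp.ncard) :
    ∀ U : Set W, U.Nonempty → (U.ncard : ℝ) ≤ (Fintype.card W : ℝ) / 2 →
      min γ (1 / (R : ℝ)) * (U.ncard : ℝ) ≤ (((nbhd G U) \ U).ncard : ℝ) := by
  intro U hU hhalf
  rcases le_or_gt R U.ncard with hlarge | hsmall
  · calc min γ (1 / (R : ℝ)) * U.ncard ≤ γ * U.ncard := by gcongr; exact min_le_left _ _
      _ ≤ _ := h1 U hlarge hhalf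
  · have hR : (0 : ℝ) < R := by exact_mod_cast hU.ncard_pos.trans hsmall
    have hboundary : 1 ≤ (nbhd G U \ U).ncard :=
      (nbhd_diff_nonempty_of_ncard_lt hU fun c => hsmall.trans (h2 c)).ncard_pos
    calc min γ (1 / (R : ℝ)) * U.ncard ≤ 1 / R * R := by
          gcongr; exact min_le_right _ _
      _ = 1 := one_div_mul_cancel hR.ne'
      _ ≤ _ := by exact_mod_cast hboundary

/-- If `G` is an `(R,γ)`-pseudo-magnifier all of whose connected components have more
than `R` vertices, then `G` is a `min(γ, 1/R)`-magnifier. -/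
theorem pseudo_magnifier_is_magnifier
    {W : Type} [Fintype W] (G : SimpleGraph W) (R : ℕ) (hR : 1 ≤ R)
    (γ : ℝ) (hγ : 0 < γ)
    (h1 : ∀ U : Set W, R ≤ U.ncard → (U.ncard : ℝ) ≤ (Fintype.card W : ℝ) / 2 →
      γ * (U.ncard : ℝ) ≤ (((nbhd G U) \ U).ncard : ℝ))
    (h2 : ∀ c : G.ConnectedComponent, R < c.supp.ncard) :
    ∀ U : Set W, U.Nonempty → (U.ncard : ℝ) ≤ (Fintype.card W : ℝ) / 2 →
      min γ (1 / (R : ℝ)) * (U.ncard : ℝ) ≤ (((nbhd G U) \ U).ncard : ℝ) :=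
  pseudo_magnifier_is_magnifier_general G R γ h1 h2
end

section
/- Let C > 0 and θ be real numbers with 0 < θ, θ ≤ 1/2, and 2θ ≤ 1/C. Then the function g(x) = (1/C)·H₂(x) − H₂(θx) is concave on the open interval (0,1). -/
/-!
Since `H₂ = h / log 2` for the natural-log entropy `h = Real.binEntropy`, it suffices that
`x ↦ a·h(x) − h(θx)` is concave on `(0,1)`. Using `h''(p) = −1/(p(1−p))`, its second derivative is
`−a/(x(1−x)) + θ/(x(1−θx))`, which is nonpositive once `θ ≤ a` and `θ ≤ 1`, because then
`x(1−x) ≤ x(1−θx)`. The hypothesis `2θ ≤ 1/C` gives `θ ≤ a := 1/C`.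
-/

open Real Set

/-- The binary entropy function `H₂(x) = −x·log₂ x − (1−x)·log₂(1−x)`
(with the conventions `H₂(0) = H₂(1) = 0`, automatic since `Real.log 0 = 0`). -/
noncomputable def binaryEntropy (x : ℝ) : ℝ :=
  -(x * Real.logb 2 x) - (1 - x) * Real.logb 2 (1 - x)

theorem binaryEntropy_eq_binEntropy_div_log_two (x : ℝ) :
    binaryEntropy x = binEntropy x / log 2 := by
  simp only [binaryEntropy, binEntropy, logb, log_inv]
  ring

theorem hasDerivAt_deriv_binEntropy {p : ℝ} (hp₀ : p ≠ 0) (hp₁ : p ≠ 1) :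
    HasDerivAt (deriv binEntropy) (-1 / (p * (1 - p))) p := by
  have hdiff : DifferentiableAt ℝ (deriv binEntropy) p := by
    rw [funext deriv_binEntropy]
    exact ((differentiableAt_id.const_sub 1).log (sub_ne_zero.2 hp₁.symm)).sub
      (differentiableAt_log hp₀)
  exact deriv2_binEntropy (p := p) ▸ hdiff.hasDerivAt

theorem HasDerivAt.const_mul_sub_const_mul_comp_const_mul {φ : ℝ → ℝ} {d e a b θ x : ℝ}
    (hx : HasDerivAt φ d x) (hθx : HasDerivAt φ e (θ * x)) :
    HasDerivAt (fun y => a * φ y - b * φ (θ * y)) (a * d - b * (θ * e)) x := by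
  have hcomp : HasDerivAt (fun y => φ (θ * y)) (e * θ) x :=
    hθx.comp x (by simpa using (hasDerivAt_id x).const_mul θ)
  simpa [mul_comm θ e] using (hx.const_mul a).fun_sub (hcomp.const_mul b)

theorem concaveOn_mul_binEntropy_sub_binEntropy_const_mul {a θ : ℝ} (hθ₀ : 0 < θ)
    (hθ₁ : θ ≤ 1) (hθa : θ ≤ a) :
    ConcaveOn ℝ (Ioo 0 1) (fun x => a * binEntropy x - binEntropy (θ * x)) := by
  have hθx {x : ℝ} (hx : x ∈ Ioo (0 : ℝ) 1) : θ * x ≠ 0 ∧ θ * x ≠ 1 :=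
    ⟨by nlinarith [hx.1], by nlinarith [hx.1, hx.2]⟩
  refine concaveOn_of_hasDerivWithinAt2_nonpos (convex_Ioo 0 1) (by fun_prop)
    (f' := fun x => a * deriv binEntropy x - θ * deriv binEntropy (θ * x))
    (f'' := fun x => a * (-1 / (x * (1 - x))) - θ * (θ * (-1 / (θ * x * (1 - θ * x)))))
    ?_ ?_ ?_ <;> rw [interior_Ioo] <;> intro x hx
  · simpa using (HasDerivAt.const_mul_sub_const_mul_comp_const_mul (b := 1)
      (differentiableAt_binEntropy hx.1.ne' hx.2.ne).hasDerivAt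
      (differentiableAt_binEntropy (hθx hx).1 (hθx hx).2).hasDerivAt).hasDerivWithinAt
  · exact (HasDerivAt.const_mul_sub_const_mul_comp_const_mul
      (hasDerivAt_deriv_binEntropy hx.1.ne' hx.2.ne)
      (hasDerivAt_deriv_binEntropy (hθx hx).1 (hθx hx).2)).hasDerivWithinAt
  · obtain ⟨hx₀, hx₁⟩ := hx
    have hcompare : θ / (x * (1 - θ * x)) ≤ a / (x * (1 - x)) :=
      div_le_div₀ (hθ₀.le.trans hθa) hθa (by nlinarith)
        (by nlinarith [mul_nonneg (sub_nonneg.2 hθ₁) (sq_nonneg x)])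
    have hθ : θ * (θ * (-1 / (θ * x * (1 - θ * x)))) = -(θ / (x * (1 - θ * x))) := by
      field_simp
    have ha : a * (-1 / (x * (1 - x))) = -(a / (x * (1 - x))) := by ring
    linarith

theorem entropy_difference_concave_general
    (C θ : ℝ) (hθ0 : 0 < θ) (hθ1 : θ ≤ 1 / 2) (hθC : 2 * θ ≤ 1 / C) :
    ConcaveOn ℝ (Set.Ioo (0 : ℝ) 1)
      (fun x => (1 / C) * binaryEntropy x - binaryEntropy (θ * x)) := by
  have hconc := (concaveOn_mul_binEntropy_sub_binEntropy_const_mul hθ0 (by linarith)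
    (by linarith : θ ≤ 1 / C)).smul (inv_nonneg.2 (log_nonneg one_le_two))
  refine hconc.congr fun x _ => ?_
  simp only [binaryEntropy_eq_binEntropy_div_log_two, smul_eq_mul]
  ring

/-- For reals `C > 0` and `0 < θ ≤ 1/2` with `2θ ≤ 1/C`, the function
`g(x) = (1/C)·H₂(x) − H₂(θx)` is concave on `(0,1)`. -/
theorem entropy_difference_concave
    (C θ : ℝ) (hC : 0 < C) (hθ0 : 0 < θ) (hθ1 : θ ≤ 1 / 2) (hθC : 2 * θ ≤ 1 / C) :
    ConcaveOn ℝ (Set.Ioo (0 : ℝ) 1)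
      (fun x => (1 / C) * binaryEntropy x - binaryEntropy (θ * x)) :=
  entropy_difference_concave_general C θ hθ0 hθ1 hθC
end
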